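/- arXiv:2407.20517 — 4 statements merged into one kernel-verified Lean document; each statement's English description precedes it below -/
import Mathlib

section
/- For every prime power q, for n ∈ {2,3}, for every isotropic vector x ∈ F^n and every λ ∈ F^×, the number of isotropic vectors y ∈ F^n with ⟨x,y⟩ = λ equals (q^n − (−1)^n)(q^{n−1} − (−1)^{n−1})/(q^2 − 1) − 1 (i.e., q for n = 2 and q^3 for n = 3). -/
open Matrix Polynomial

/-- The Hermitian inner product `⟨x,y⟩ = ∑ i, x i * (y i)^q` of row vectors over a field of
order `q^2`. -/
def herm (q : ℕ) {n : ℕ} {F : Type*} [Field F] (x y : Fin n → F) : F :=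
  ∑ i, x i * (y i) ^ q

/-- `x` is an isotropic vector: nonzero with `⟨x,x⟩ = 0`. -/
def Isotropic (q : ℕ) {n : ℕ} {F : Type*} [Field F] (x : Fin n → F) : Prop :=
  x ≠ 0 ∧ herm q x x = 0

section Aux
variable {F : Type*} [Field F] [Fintype F] {q : ℕ}

lemma card_pow_eq_le (hq2 : 2 ≤ q) (c : F) :
    Nat.card {a : F // a ^ q = c * a} ≤ q := by
  classical
  have hP : (X ^ q - C c * X : F[X]).natDegree = q := by
    have h1 : (C c * X : F[X]).natDegree < (X ^ q : F[X]).natDegree := by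
      simpa [Polynomial.natDegree_X_pow] using
        lt_of_le_of_lt (Polynomial.natDegree_C_mul_le c X)
          (by simpa [Polynomial.natDegree_X] using (by omega : 1 < q))
    simpa [Polynomial.natDegree_X_pow] using Polynomial.natDegree_sub_eq_left_of_natDegree_lt h1
  have hPne : (X ^ q - C c * X : F[X]) ≠ 0 := by
    intro h
    rw [h] at hP
    simp at hP
    omega
  have hsub : ∀ a : F, a ^ q = c * a → a ∈ (X ^ q - C c * X : F[X]).roots.toFinset := by
    intro a ha
    simp [Multiset.mem_toFinset, Polynomial.mem_roots, hPne, Polynomial.IsRoot, ha]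
  calc Nat.card {a : F // a ^ q = c * a}
      = Fintype.card {a : F // a ^ q = c * a} := Nat.card_eq_fintype_card
    _ ≤ (X ^ q - C c * X : F[X]).roots.toFinset.card := by
        have : Fintype.card {a : F // a ^ q = c * a} ≤
            Fintype.card ((X ^ q - C c * X : F[X]).roots.toFinset : Finset F) :=
          Fintype.card_le_of_injective (fun a => ⟨a.1, hsub a.1 a.2⟩)
            (fun a b hab => Subtype.ext (by simpa using hab))
        rwa [Fintype.card_coe] at this
    _ ≤ Multiset.card (X ^ q - C c * X : F[X]).roots := Multiset.toFinset_card_le _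
    _ ≤ (X ^ q - C c * X : F[X]).natDegree := Polynomial.card_roots' _
    _ = q := hP

lemma card_traceFiber (hq2 : 2 ≤ q) (hF : Fintype.card F = q ^ 2)
    (hadd : ∀ a b : F, (a + b) ^ q = a ^ q + b ^ q)
    (hinv : ∀ a : F, (a ^ q) ^ q = a)
    (μ : F) (hμ : μ ^ q = μ) : Nat.card {a : F // a + a ^ q = μ} = q := by
  classical
  have hq0 : q ≠ 0 := by omega
  set T : F →+ F := {
    toFun := fun a => a + a ^ q
    map_zero' := by simp [zero_pow hq0]
    map_add' := by
      intro a b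
      show (a + b) + (a + b) ^ q = (a + a ^ q) + (b + b ^ q)
      rw [hadd]; ring } with hT
  have hTfun : ∀ a : F, T a = a + a ^ q := fun a => rfl
  -- kernel card ≤ q
  have hker : Nat.card T.ker ≤ q := by
    have e : {a : F // a ∈ T.ker} ≃ {a : F // a ^ q = (-1) * a} :=
      Equiv.subtypeEquivRight (by
        intro a
        simp only [AddMonoidHom.mem_ker, hTfun]
        constructor <;> intro h <;> linear_combination h)
    calc Nat.card T.ker = Nat.card {a : F // a ^ q = (-1) * a} := Nat.card_congr e
      _ ≤ q := card_pow_eq_le hq2 _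
  -- range card ≤ q
  have hrangefix : ∀ b : F, b ∈ T.range → b ^ q = b := by
    rintro b ⟨a, rfl⟩
    rw [hTfun, hadd, hinv]
    ring
  have hrange : Nat.card T.range ≤ q := by
    have e : {a : F // a ∈ T.range} ≃ {a : F // a ∈ T.range ∧ a ^ q = (1:F) * a} :=
      Equiv.subtypeEquivRight (fun a => by
        simp only [one_mul]
        exact ⟨fun h => ⟨h, hrangefix a h⟩, fun h => h.1⟩)
    calc Nat.card T.range = Nat.card {a : F // a ∈ T.range ∧ a ^ q = (1:F) * a} :=
          Nat.card_congr e
      _ ≤ Nat.card {a : F // a ^ q = (1:F) * a} := by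
          apply Nat.card_le_card_of_injective (fun a => ⟨a.1, a.2.2⟩)
          intro a b hab; exact Subtype.ext (by simpa using hab)
      _ ≤ q := card_pow_eq_le hq2 _
  -- product
  have hprod : Nat.card F = Nat.card T.range * Nat.card T.ker := by
    rw [AddSubgroup.card_eq_card_quotient_mul_card_addSubgroup T.ker]
    congr 1
    exact Nat.card_congr (QuotientAddGroup.quotientKerEquivRange T).toEquiv
  rw [Nat.card_eq_fintype_card, hF] at hprod
  have hkq : Nat.card T.ker = q := by
    have h1 : q * q ≤ q * Nat.card T.ker := by
      calc q * q = Nat.card T.range * Nat.card T.ker := by rw [← hprod]; ring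
        _ ≤ q * Nat.card T.ker := Nat.mul_le_mul_right _ hrange
    exact le_antisymm hker (Nat.le_of_mul_le_mul_left h1 (by omega))
  have hrq : Nat.card T.range = q := by
    have h1 : q * q ≤ Nat.card T.range * q := by
      calc q * q = Nat.card T.range * Nat.card T.ker := by rw [← hprod]; ring
        _ ≤ Nat.card T.range * q := Nat.mul_le_mul_left _ hker
    exact le_antisymm hrange (Nat.le_of_mul_le_mul_right h1 (by omega))
  -- range = fixed set
  have hfixcard : Nat.card {a : F // a ^ q = a} ≤ q := by
    have := card_pow_eq_le (F := F) hq2 1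
    calc Nat.card {a : F // a ^ q = a} = Nat.card {a : F // a ^ q = (1:F) * a} := by
          apply Nat.card_congr; exact Equiv.subtypeEquivRight (by simp)
      _ ≤ q := this
  -- μ ∈ range
  have hμrange : μ ∈ T.range := by
    have hsub : (T.range : Set F) ⊆ {a : F | a ^ q = a} := fun a ha => hrangefix a ha
    have hfin : ({a : F | a ^ q = a} : Set F).Finite := Set.toFinite _
    have hle : ({a : F | a ^ q = a} : Set F).ncard ≤ (T.range : Set F).ncard := by
      have h1 : ({a : F | a ^ q = a} : Set F).ncard = Nat.card {a : F // a ^ q = a} :=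
        (Nat.card_coe_set_eq _).symm
      have h2 : (T.range : Set F).ncard = Nat.card T.range :=
        (Nat.card_coe_set_eq _).symm
      rw [h1, h2, hrq]
      exact hfixcard
    have heq : (T.range : Set F) = {a : F | a ^ q = a} :=
      Set.eq_of_subset_of_ncard_le hsub hle hfin
    show μ ∈ (T.range : Set F)
    rw [heq]
    exact hμ
  obtain ⟨a₀, ha₀⟩ := hμrange
  have e : {a : F // a + a ^ q = μ} ≃ T.ker := {
    toFun := fun a => ⟨a.1 - a₀, by
      simp only [AddMonoidHom.mem_ker, map_sub, ha₀]
      rw [hTfun]; rw [a.2]; ring⟩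
    invFun := fun b => ⟨b.1 + a₀, by
      have hb := b.2
      simp only [AddMonoidHom.mem_ker] at hb
      have : T (b.1 + a₀) = μ := by rw [map_add, hb, ha₀, zero_add]
      simpa [hTfun] using this⟩
    left_inv := fun a => Subtype.ext (by simp)
    right_inv := fun b => Subtype.ext (by simp) }
  rw [Nat.card_congr e, hkq]

lemma card_traceFiber' (hq2 : 2 ≤ q) (hF : Fintype.card F = q ^ 2)
    (hadd : ∀ a b : F, (a + b) ^ q = a ^ q + b ^ q)
    (hinv : ∀ a : F, (a ^ q) ^ q = a)
    (lam μ : F) (hlam : lam ≠ 0) (hμ : μ ^ q = μ) :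
    Nat.card {c : F // lam ^ q * c ^ q + lam * c = μ} = q := by
  have hlq : lam ^ q ≠ 0 := pow_ne_zero _ hlam
  have e : {c : F // lam ^ q * c ^ q + lam * c = μ} ≃ {a : F // a + a ^ q = μ} := {
    toFun := fun c => ⟨lam ^ q * c.1 ^ q, by
      rw [mul_pow, hinv, hinv]; linear_combination c.2⟩
    invFun := fun a => ⟨(a.1 / lam ^ q) ^ q, by
      rw [hinv, mul_div_cancel₀ _ hlq, div_pow, hinv]
      field_simp
      linear_combination a.2⟩
    left_inv := fun c => Subtype.ext (by
      show ((lam ^ q * c.1 ^ q) / lam ^ q) ^ q = c.1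
      rw [mul_comm, mul_div_assoc, div_self hlq, mul_one, hinv])
    right_inv := fun a => Subtype.ext (by
      show lam ^ q * ((a.1 / lam ^ q) ^ q) ^ q = a.1
      rw [hinv, mul_div_cancel₀ _ hlq]) }
  rw [Nat.card_congr e]
  exact card_traceFiber hq2 hF hadd hinv μ hμ

lemma count2 (hq2 : 2 ≤ q) (hF : Fintype.card F = q ^ 2)
    (hadd : ∀ a b : F, (a + b) ^ q = a ^ q + b ^ q)
    (hinv : ∀ a : F, (a ^ q) ^ q = a)
    (x : Fin 2 → F) (hx0 : x 0 ≠ 0) (hxx : herm q x x = 0)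
    (lam : F) (hlam : lam ≠ 0) :
    Nat.card {y : Fin 2 → F // herm q y y = 0 ∧ herm q x y = lam} = q := by
  have hq0 : q ≠ 0 := by omega
  have hneg : ∀ a : F, (-a) ^ q = -(a ^ q) := by
    intro a
    have := hadd a (-a)
    simp [zero_pow hq0] at this
    linear_combination -this
  have hsub : ∀ a b : F, (a - b) ^ q = a ^ q - b ^ q := by
    intro a b
    rw [sub_eq_add_neg, hadd, hneg]; ring
  have hx0q : (x 0) ^ q ≠ 0 := pow_ne_zero _ hx0
  have hxx' : x 0 * (x 0) ^ q + x 1 * (x 1) ^ q = 0 := by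
    simpa [herm, Fin.sum_univ_two] using hxx
  have hx1 : x 1 ≠ 0 := by
    intro h
    have h2 : x 0 * x 0 ^ q = 0 := by simpa [h, zero_pow hq0] using hxx'
    rcases mul_eq_zero.mp h2 with h' | h'
    · exact hx0 h'
    · exact hx0q h'
  set yf : F → (Fin 2 → F) := fun c => ![lam ^ q / (x 0) ^ q + c * x 0, c * x 1] with hyf
  have hA : ∀ c, herm q x (yf c) = lam := by
    intro c
    have expand : herm q x (yf c) = lam + c ^ q * (x 0 * x 0 ^ q + x 1 * x 1 ^ q) := by
      simp only [herm, Fin.sum_univ_two, hyf, Matrix.cons_val_zero, Matrix.cons_val_one,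
        Matrix.head_cons, hadd, mul_pow, div_pow, hinv]
      field_simp
      ring
    rw [expand, hxx']
    ring
  have hB : ∀ c, herm q (yf c) (yf c) =
      lam ^ q * lam / ((x 0) ^ q * x 0) + (lam ^ q * c ^ q + lam * c) := by
    intro c
    have expand : herm q (yf c) (yf c) =
        lam ^ q * lam / ((x 0) ^ q * x 0) + (lam ^ q * c ^ q + lam * c)
          + c * c ^ q * (x 0 * x 0 ^ q + x 1 * x 1 ^ q) := by
      simp only [herm, Fin.sum_univ_two, hyf, Matrix.cons_val_zero, Matrix.cons_val_one,
        Matrix.head_cons, hadd, mul_pow, div_pow, hinv]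
      field_simp
      ring
    rw [expand, hxx']
    ring
  have hC : ∀ y : Fin 2 → F, herm q x y = lam → y = yf (y 1 / x 1) := by
    intro y hy
    simp only [herm, Fin.sum_univ_two] at hy
    funext i
    fin_cases i
    · show y 0 = lam ^ q / (x 0) ^ q + (y 1 / x 1) * x 0
      have h0 : (y 0) ^ q = (lam - x 1 * (y 1) ^ q) / x 0 := by
        field_simp
        linear_combination hy
      calc y 0 = ((y 0) ^ q) ^ q := (hinv _).symm
        _ = ((lam - x 1 * (y 1) ^ q) / x 0) ^ q := by rw [h0]
        _ = (lam ^ q - x 1 ^ q * y 1) / x 0 ^ q := by rw [div_pow, hsub, mul_pow, hinv]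
        _ = lam ^ q / (x 0) ^ q + (y 1 / x 1) * x 0 := by
            field_simp
            linear_combination (-(y 1)) * hxx'
    · show y 1 = (y 1 / x 1) * x 1
      field_simp
  have hμ : (-(lam ^ q * lam / ((x 0) ^ q * x 0))) ^ q = -(lam ^ q * lam / ((x 0) ^ q * x 0)) := by
    rw [hneg, div_pow, mul_pow, mul_pow, hinv, hinv]
    ring
  have e : {y : Fin 2 → F // herm q y y = 0 ∧ herm q x y = lam} ≃
      {c : F // lam ^ q * c ^ q + lam * c = -(lam ^ q * lam / ((x 0) ^ q * x 0))} := {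
    toFun := fun y => ⟨y.1 1 / x 1, by
      have hyy := hC y.1 y.2.2
      have h0 := y.2.1
      rw [hyy, hB] at h0
      linear_combination h0⟩
    invFun := fun c => ⟨yf c.1, ⟨by
      rw [hB]
      linear_combination c.2, hA c.1⟩⟩
    left_inv := fun y => Subtype.ext (hC y.1 y.2.2).symm
    right_inv := fun c => Subtype.ext (by
      show (yf c.1) 1 / x 1 = c.1
      simp only [hyf, Matrix.cons_val_one, Matrix.head_cons]
      exact mul_div_cancel_right₀ _ hx1) }
  rw [Nat.card_congr e]
  exact card_traceFiber' hq2 hF hadd hinv lam _ hlam hμ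

lemma count3 (hq2 : 2 ≤ q) (hF : Fintype.card F = q ^ 2)
    (hadd : ∀ a b : F, (a + b) ^ q = a ^ q + b ^ q)
    (hinv : ∀ a : F, (a ^ q) ^ q = a)
    (x : Fin 3 → F) (hx0 : x 0 ≠ 0) (hx1 : x 1 ≠ 0) (hxx : herm q x x = 0)
    (lam : F) (hlam : lam ≠ 0) :
    Nat.card {y : Fin 3 → F // herm q y y = 0 ∧ herm q x y = lam} = q ^ 3 := by
  classical
  have hq0 : q ≠ 0 := by omega
  have hneg : ∀ a : F, (-a) ^ q = -(a ^ q) := by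
    intro a
    have := hadd a (-a)
    simp [zero_pow hq0] at this
    linear_combination -this
  have hsub : ∀ a b : F, (a - b) ^ q = a ^ q - b ^ q := by
    intro a b
    rw [sub_eq_add_neg, hadd, hneg]; ring
  have hx0q : (x 0) ^ q ≠ 0 := pow_ne_zero _ hx0
  have hxx' : x 0 * (x 0) ^ q + x 1 * (x 1) ^ q + x 2 * (x 2) ^ q = 0 := by
    simpa [herm, Fin.sum_univ_three] using hxx
  set yf : F → F → (Fin 3 → F) := fun c d =>
    ![lam ^ q / (x 0) ^ q + c * x 0 - d * ((x 2) ^ q * x 0), c * x 1,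
      c * x 2 + d * ((x 0) ^ q * x 0)]
    with hyf
  set g : F → F := fun d =>
    -(lam ^ q * lam / ((x 0) ^ q * x 0))
      + d ^ q * (lam ^ q * x 2)
      + d * (lam * (x 2) ^ q)
      - d * d ^ q * (x 2 * (x 2) ^ q * (x 0 * (x 0) ^ q) + ((x 0) ^ q * x 0) * ((x 0) ^ q * x 0))
    with hg
  have hgfix : ∀ d, (g d) ^ q = g d := by
    intro d
    simp only [hg, sub_eq_add_neg, hadd, hneg, mul_pow, div_pow, hinv]
    ring
  have hA : ∀ c d, herm q x (yf c d) = lam := by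
    intro c d
    have expand : herm q x (yf c d) =
        lam + c ^ q * (x 0 * (x 0) ^ q + x 1 * (x 1) ^ q + x 2 * (x 2) ^ q) := by
      simp only [herm, Fin.sum_univ_three, hyf, Matrix.cons_val_zero, Matrix.cons_val_one,
        Matrix.head_cons, Matrix.cons_val_two, Matrix.tail_cons, sub_eq_add_neg, hadd, hneg,
        mul_pow, div_pow, hinv]
      field_simp
      ring
    rw [expand, hxx']
    ring
  have hB : ∀ c d, herm q (yf c d) (yf c d) =
      lam ^ q * c ^ q + lam * c - g d
        + c * c ^ q * (x 0 * (x 0) ^ q + x 1 * (x 1) ^ q + x 2 * (x 2) ^ q) := by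
    intro c d
    simp only [herm, Fin.sum_univ_three, hyf, hg, Matrix.cons_val_zero, Matrix.cons_val_one,
      Matrix.head_cons, Matrix.cons_val_two, Matrix.tail_cons, sub_eq_add_neg, hadd, hneg,
      mul_pow, div_pow, hinv]
    field_simp
    ring
  have hC : ∀ y : Fin 3 → F, herm q x y = lam →
      y = yf (y 1 / x 1) ((y 2 - (y 1 / x 1) * x 2) / ((x 0) ^ q * x 0)) := by
    intro y hy
    simp only [herm, Fin.sum_univ_three] at hy
    funext i
    fin_cases i
    · show y 0 = lam ^ q / (x 0) ^ q + (y 1 / x 1) * x 0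
        - (y 2 - (y 1 / x 1) * x 2) / ((x 0) ^ q * x 0) * ((x 2) ^ q * x 0)
      have h0 : (y 0) ^ q = (lam - x 1 * (y 1) ^ q - x 2 * (y 2) ^ q) / x 0 := by
        field_simp
        linear_combination hy
      calc y 0 = ((y 0) ^ q) ^ q := (hinv _).symm
        _ = ((lam - x 1 * (y 1) ^ q - x 2 * (y 2) ^ q) / x 0) ^ q := by rw [h0]
        _ = (lam ^ q - (x 1) ^ q * y 1 - (x 2) ^ q * y 2) / (x 0) ^ q := by
            rw [div_pow, hsub, hsub, mul_pow, mul_pow, hinv, hinv]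
        _ = lam ^ q / (x 0) ^ q + (y 1 / x 1) * x 0
            - (y 2 - (y 1 / x 1) * x 2) / ((x 0) ^ q * x 0) * ((x 2) ^ q * x 0) := by
            field_simp
            linear_combination (-(y 1)) * hxx'
    · show y 1 = (y 1 / x 1) * x 1
      field_simp
    · show y 2 = (y 1 / x 1) * x 2 + (y 2 - (y 1 / x 1) * x 2) / ((x 0) ^ q * x 0) * ((x 0) ^ q * x 0)
      have hu : (x 0) ^ q * x 0 ≠ 0 := mul_ne_zero hx0q hx0
      field_simp
      ring
  have e : {y : Fin 3 → F // herm q y y = 0 ∧ herm q x y = lam} ≃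
      {cd : F × F // lam ^ q * cd.1 ^ q + lam * cd.1 = g cd.2} := {
    toFun := fun y => ⟨(y.1 1 / x 1, (y.1 2 - (y.1 1 / x 1) * x 2) / ((x 0) ^ q * x 0)), by
      have hyy := hC y.1 y.2.2
      have h0 := y.2.1
      rw [hyy, hB] at h0
      rw [hxx'] at h0
      linear_combination h0⟩
    invFun := fun cd => ⟨yf cd.1.1 cd.1.2, ⟨by
      rw [hB, hxx']
      linear_combination cd.2, hA cd.1.1 cd.1.2⟩⟩
    left_inv := fun y => Subtype.ext (hC y.1 y.2.2).symm
    right_inv := fun cd => Subtype.ext (by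
      have h1 : (yf cd.1.1 cd.1.2) 1 / x 1 = cd.1.1 := by
        show (cd.1.1 * x 1) / x 1 = cd.1.1
        exact mul_div_cancel_right₀ _ hx1
      have h2 : (yf cd.1.1 cd.1.2) 2 = cd.1.1 * x 2 + cd.1.2 * ((x 0) ^ q * x 0) := rfl
      have hu : (x 0) ^ q * x 0 ≠ 0 := mul_ne_zero hx0q hx0
      show ((yf cd.1.1 cd.1.2) 1 / x 1,
          ((yf cd.1.1 cd.1.2) 2 - ((yf cd.1.1 cd.1.2) 1 / x 1) * x 2) / ((x 0) ^ q * x 0))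
        = cd.1
      rw [h1, h2]
      have : (cd.1.1 * x 2 + cd.1.2 * ((x 0) ^ q * x 0) - cd.1.1 * x 2) / ((x 0) ^ q * x 0)
          = cd.1.2 := by
        rw [add_sub_cancel_left]
        exact mul_div_cancel_right₀ _ hu
      rw [this]) }
  have e2 : {cd : F × F // lam ^ q * cd.1 ^ q + lam * cd.1 = g cd.2} ≃
      Σ d : F, {c : F // lam ^ q * c ^ q + lam * c = g d} := {
    toFun := fun cd => ⟨cd.1.2, ⟨cd.1.1, cd.2⟩⟩
    invFun := fun s => ⟨(s.2.1, s.1), s.2.2⟩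
    left_inv := fun cd => rfl
    right_inv := fun s => rfl }
  rw [Nat.card_congr (e.trans e2)]
  have hfib : ∀ d : F, Nat.card {c : F // lam ^ q * c ^ q + lam * c = g d} = q :=
    fun d => card_traceFiber' hq2 hF hadd hinv lam (g d) hlam (hgfix d)
  rw [Nat.card_eq_fintype_card, Fintype.card_sigma]
  have : ∀ d : F, Fintype.card {c : F // lam ^ q * c ^ q + lam * c = g d} = q := by
    intro d
    rw [← Nat.card_eq_fintype_card]
    exact hfib d
  simp only [this, Finset.sum_const, Finset.card_univ, smul_eq_mul, hF]
  ring

lemma herm_comp {n : ℕ} (u v : Fin n → F) (σ : Equiv.Perm (Fin n)) :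
    herm q (u ∘ σ) (v ∘ σ) = herm q u v := by
  simp only [herm, Function.comp_apply]
  exact Equiv.sum_comp σ (fun i => u i * (v i) ^ q)

lemma count_perm {n : ℕ} (x : Fin n → F) (lam : F) (σ : Equiv.Perm (Fin n)) :
    Nat.card {y : Fin n → F // herm q y y = 0 ∧ herm q (x ∘ σ) y = lam} =
      Nat.card {y : Fin n → F // herm q y y = 0 ∧ herm q x y = lam} := by
  apply Nat.card_congr
  refine {
    toFun := fun y => ⟨y.1 ∘ ⇑(σ⁻¹), ⟨?_, ?_⟩⟩
    invFun := fun y => ⟨y.1 ∘ ⇑σ, ⟨?_, ?_⟩⟩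
    left_inv := ?_
    right_inv := ?_ }
  · calc herm q (y.1 ∘ ⇑(σ⁻¹)) (y.1 ∘ ⇑(σ⁻¹))
        = herm q ((y.1 ∘ ⇑(σ⁻¹)) ∘ σ) ((y.1 ∘ ⇑(σ⁻¹)) ∘ σ) := (herm_comp _ _ σ).symm
      _ = herm q y.1 y.1 := by congr 1 <;> · funext i; simp
      _ = 0 := y.2.1
  · calc herm q x (y.1 ∘ ⇑(σ⁻¹)) = herm q (x ∘ σ) ((y.1 ∘ ⇑(σ⁻¹)) ∘ σ) := by
          rw [herm_comp]
      _ = herm q (x ∘ σ) y.1 := by congr 1; funext i; simp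
      _ = lam := y.2.2
  · calc herm q (y.1 ∘ ⇑σ) (y.1 ∘ ⇑σ) = herm q y.1 y.1 := herm_comp _ _ σ
      _ = 0 := y.2.1
  · calc herm q (x ∘ σ) (y.1 ∘ ⇑σ) = herm q x y.1 := herm_comp _ _ σ
      _ = lam := y.2.2
  · intro y
    apply Subtype.ext
    funext i
    simp
  · intro y
    apply Subtype.ext
    funext i
    simp

end Aux

/-- For `n ∈ {2,3}`, the valency of the relation `R_λ`: the number of isotropic vectors `y`
with `⟨x,y⟩ = λ` equals `|Φ(n,q)|/(q²−1) − 1`. -/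
theorem valency_R_small_n
    (q : ℕ) (hq : IsPrimePow q) (n : ℕ) (hn : n = 2 ∨ n = 3)
    (F : Type*) [Field F] [Fintype F] (hF : Fintype.card F = q ^ 2)
    (x : Fin n → F) (hx : Isotropic q x) (lam : F) (hlam : lam ≠ 0) :
    (Nat.card {y : Fin n → F // Isotropic q y ∧ herm q x y = lam} : ℤ) =
      ((q : ℤ) ^ n - (-1) ^ n) * ((q : ℤ) ^ (n - 1) - (-1) ^ (n - 1)) / ((q : ℤ) ^ 2 - 1)
        - 1 := by
  have hq2 : 2 ≤ q := hq.two_le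
  have hq0 : q ≠ 0 := by omega
  -- characteristic facts
  obtain ⟨p, k, hp, hk, hpk⟩ := hq
  obtain ⟨m, hpc, hcard⟩ := FiniteField.card F (ringChar F)
  have hpprime : p.Prime := hp.nat_prime
  have h1 : (ringChar F) ^ (m : ℕ) = p ^ (2 * k) := by
    rw [← hcard, hF, ← hpk]; ring
  have h2 : ringChar F ∣ p ^ (2 * k) :=
    h1 ▸ dvd_pow_self (ringChar F) (by exact_mod_cast m.pos.ne')
  have hrc : ringChar F = p := (Nat.prime_dvd_prime_iff_eq hpc hpprime).mp
    (hpc.dvd_of_dvd_pow h2)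
  haveI : Fact p.Prime := ⟨hpprime⟩
  haveI : CharP F p := hrc ▸ ringChar.charP F
  have hadd : ∀ a b : F, (a + b) ^ q = a ^ q + b ^ q := by
    intro a b
    rw [← hpk]
    exact add_pow_char_pow ..
  have hinv : ∀ a : F, (a ^ q) ^ q = a := by
    intro a
    rw [← pow_mul, show q * q = Fintype.card F from by rw [hF]; ring, FiniteField.pow_card]
  -- drop the `y ≠ 0` condition
  have hiso : ∀ y : Fin n → F,
      (Isotropic q y ∧ herm q x y = lam) ↔ (herm q y y = 0 ∧ herm q x y = lam) := by
    intro y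
    constructor
    · rintro ⟨⟨-, h⟩, h2⟩; exact ⟨h, h2⟩
    · rintro ⟨h, h2⟩
      refine ⟨⟨?_, h⟩, h2⟩
      rintro rfl
      apply hlam
      rw [← h2]
      simp [herm, zero_pow hq0]
  have hcongr : Nat.card {y : Fin n → F // Isotropic q y ∧ herm q x y = lam}
      = Nat.card {y : Fin n → F // herm q y y = 0 ∧ herm q x y = lam} :=
    Nat.card_congr (Equiv.subtypeEquivRight hiso)
  have hzero : ∀ a : F, a * a ^ q = 0 → a = 0 := by
    intro a ha
    rcases mul_eq_zero.mp ha with h | h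
    · exact h
    · exact pow_eq_zero_iff hq0 |>.mp h
  have hqZ : (2 : ℤ) ≤ (q : ℤ) := by exact_mod_cast hq2
  have hne : ((q : ℤ) ^ 2 - 1) ≠ 0 := by nlinarith
  rcases hn with rfl | rfl
  · -- n = 2
    have hxx' : x 0 * (x 0) ^ q + x 1 * (x 1) ^ q = 0 := by
      simpa [herm, Fin.sum_univ_two] using hx.2
    have hx0 : x 0 ≠ 0 := by
      intro h
      have h1' : x 1 = 0 := hzero _ (by rw [h] at hxx'; simpa [zero_pow hq0] using hxx')
      exact hx.1 (funext fun i => by fin_cases i <;> simp [h, h1'])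
    rw [hcongr, count2 hq2 hF hadd hinv x hx0 hx.2 lam hlam]
    have hmain : ((q : ℤ) ^ 2 - (-1 : ℤ) ^ 2) * ((q : ℤ) ^ (2 - 1) - (-1 : ℤ) ^ (2 - 1))
        = ((q : ℤ) ^ 2 - 1) * ((q : ℤ) + 1) := by norm_num
    rw [hmain, Int.mul_ediv_cancel_left _ hne]
    ring
  · -- n = 3
    have hxx' : x 0 * (x 0) ^ q + x 1 * (x 1) ^ q + x 2 * (x 2) ^ q = 0 := by
      simpa [herm, Fin.sum_univ_three] using hx.2
    have main : ∀ σ : Equiv.Perm (Fin 3), (x ∘ σ) 0 ≠ 0 → (x ∘ σ) 1 ≠ 0 →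
        Nat.card {y : Fin 3 → F // herm q y y = 0 ∧ herm q x y = lam} = q ^ 3 := by
      intro σ hs0 hs1
      rw [← count_perm x lam σ]
      exact count3 hq2 hF hadd hinv (x ∘ σ) hs0 hs1
        (by rw [herm_comp]; exact hx.2) lam hlam
    have hcount : Nat.card {y : Fin 3 → F // herm q y y = 0 ∧ herm q x y = lam} = q ^ 3 := by
      by_cases h0 : x 0 = 0 <;> by_cases h1 : x 1 = 0
      · exfalso
        have hxx2 : x 2 * x 2 ^ q = 0 := by
          rw [h0, h1] at hxx'
          simpa using hxx'
        have h2' : x 2 = 0 := hzero _ hxx2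
        exact hx.1 (funext fun i => by fin_cases i <;> simp [h0, h1, h2'])
      · by_cases h2 : x 2 = 0
        · exfalso
          have hxx1 : x 1 * x 1 ^ q = 0 := by
            rw [h0, h2] at hxx'
            simpa using hxx'
          exact h1 (hzero _ hxx1)
        · exact main (Equiv.swap 0 1 * Equiv.swap 1 2) (by simpa [Equiv.swap_apply_def] using h1) (by simpa [Equiv.swap_apply_def] using h2)
      · by_cases h2 : x 2 = 0
        · exfalso
          have hxx0 : x 0 * x 0 ^ q = 0 := by
            rw [h1, h2] at hxx'
            simpa using hxx'
          exact h0 (hzero _ hxx0)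
        · exact main (Equiv.swap 1 2) (by simpa [Equiv.swap_apply_def] using h0) (by simpa [Equiv.swap_apply_def] using h2)
      · exact main 1 (by simpa using h0) (by simpa using h1)
    rw [hcongr, hcount]
    have hmain : ((q : ℤ) ^ 3 - (-1 : ℤ) ^ 3) * ((q : ℤ) ^ (3 - 1) - (-1 : ℤ) ^ (3 - 1))
        = ((q : ℤ) ^ 3 + 1) * ((q : ℤ) ^ 2 - 1) := by norm_num
    rw [hmain, Int.mul_ediv_cancel _ hne]
    push_cast
    ring
end

section
/- For every prime power q and every integer n ≥ 4, for every isotropic vector x ∈ F^n, the number of isotropic vectors z ∈ F^n with ⟨x,z⟩ = 0 and z not a scalar multiple of x equals q^2 (q^{n−2} − (−1)^{n−2})(q^{n−3} − (−1)^{n−3}), i.e., q^2·|Φ(n−2,q)|. -/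
open Matrix

attribute [local instance] Classical.propDecidable

namespace HermAux

variable {q : ℕ} {F : Type*} [Field F] [Fintype F]

/-- `a ↦ a^q` is additive. Derived in main theorem from `IsPrimePow`. -/
lemma hadd_of_card (hq : IsPrimePow q) (hcard : Fintype.card F = q ^ 2) :
    ∀ a b : F, (a + b) ^ q = a ^ q + b ^ q := by
  obtain ⟨p, k, hp, hk, rfl⟩ := hq
  have hp' : Nat.Prime p := hp.nat_prime
  haveI : Fact (Nat.Prime p) := ⟨hp'⟩
  -- char F = p
  set r := ringChar F with hr
  haveI : CharP F r := ringChar.charP F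
  have hrp : Nat.Prime r := CharP.char_is_prime F r
  obtain ⟨m, -, hcm⟩ := FiniteField.card F r
  have : p ∣ r ^ (m : ℕ) := by
    rw [← hcm, hcard, ← pow_mul]
    exact dvd_pow_self p (by positivity)
  have hpr : p = r := ((Nat.prime_dvd_prime_iff_eq hp' hrp).1 (hp'.dvd_of_dvd_pow this))
  subst hpr
  intro a b
  exact add_pow_char_pow a b r k

variable (hq2 : 2 ≤ q) (hcard : Fintype.card F = q ^ 2)
  (hadd : ∀ a b : F, (a + b) ^ q = a ^ q + b ^ q)

include hcard in
lemma pow_qq (a : F) : (a ^ q) ^ q = a := by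
  rw [← pow_mul, ← sq, ← hcard, FiniteField.pow_card]

include hq2 in
omit [Fintype F] in
lemma zero_pow_q : (0 : F) ^ q = 0 := zero_pow (by omega)

include hadd hq2 in
lemma neg_pow_q (a : F) : (-a) ^ q = -(a ^ q) := by
  have := hadd a (-a)
  rw [add_neg_cancel, zero_pow_q hq2] at this
  exact eq_neg_of_add_eq_zero_right this.symm

include hadd hq2 in
lemma sub_pow_q (a b : F) : (a - b) ^ q = a ^ q - b ^ q := by
  rw [sub_eq_add_neg, hadd, neg_pow_q hq2 hadd, sub_eq_add_neg]

include hadd hq2 in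
lemma sum_pow_q {ι : Type*} (s : Finset ι) (f : ι → F) :
    (∑ i ∈ s, f i) ^ q = ∑ i ∈ s, (f i) ^ q := by
  induction s using Finset.induction with
  | empty => simpa using zero_pow_q (F := F) hq2
  | insert _ _ h ih => rw [Finset.sum_insert h, Finset.sum_insert h, hadd, ih]


set_option linter.unusedSectionVars false

section hermlemmas
variable {n : ℕ} (x y z : Fin n → F) (c : F)

lemma herm_add_left : herm q (x + y) z = herm q x z + herm q y z := by
  simp [herm, add_mul, Finset.sum_add_distrib]

include hq2 hadd in
lemma herm_add_right : herm q x (y + z) = herm q x y + herm q x z := by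
  simp only [herm, Pi.add_apply, hadd, mul_add]
  rw [Finset.sum_add_distrib]

lemma herm_smul_left : herm q (c • x) y = c * herm q x y := by
  simp [herm, Finset.mul_sum, mul_assoc]

lemma herm_smul_right : herm q x (c • y) = c ^ q * herm q x y := by
  simp only [herm, Pi.smul_apply, smul_eq_mul, mul_pow, Finset.mul_sum]
  exact Finset.sum_congr rfl fun i _ => by ring

lemma herm_zero_left : herm q (0 : Fin n → F) y = 0 := by simp [herm]

include hq2 in
lemma herm_zero_right : herm q x (0 : Fin n → F) = 0 := by
  simp [herm, zero_pow_q hq2]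

include hq2 hadd hcard in
lemma herm_conj : (herm q x y) ^ q = herm q y x := by
  rw [herm, sum_pow_q hq2 hadd]
  refine Finset.sum_congr rfl fun i _ => ?_
  rw [mul_pow, pow_qq hcard, mul_comm]

include hq2 hadd in
lemma herm_sub_right : herm q x (y - z) = herm q x y - herm q x z := by
  simp only [herm, Pi.sub_apply, sub_pow_q hq2 hadd, mul_sub]
  rw [Finset.sum_sub_distrib]

lemma herm_sub_left : herm q (x - y) z = herm q x z - herm q y z := by
  simp [herm, sub_mul, Finset.sum_sub_distrib]

include hq2 hcard hadd in
lemma herm_eq_zero_comm (h : herm q x y = 0) : herm q y x = 0 := by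
  rw [← herm_conj hq2 hcard hadd, h, zero_pow_q hq2]

lemma herm_sum_left {ι : Type*} (s : Finset ι) (f : ι → Fin n → F) :
    herm q (∑ i ∈ s, f i) y = ∑ i ∈ s, herm q (f i) y := by
  simp [herm, Finset.sum_mul]
  rw [Finset.sum_comm]

include hq2 hadd in
lemma herm_sum_right {ι : Type*} (s : Finset ι) (f : ι → Fin n → F) :
    herm q x (∑ i ∈ s, f i) = ∑ i ∈ s, herm q x (f i) := by
  induction s using Finset.induction with
  | empty => simpa using herm_zero_right hq2 x
  | insert _ _ h ih =>
      rw [Finset.sum_insert h, Finset.sum_insert h, herm_add_right hq2 hadd, ih]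

end hermlemmas

section counting

open Polynomial in
lemma card_eval_zero_le (p : Polynomial F) (hp : p ≠ 0) :
    (Finset.univ.filter fun t : F => p.eval t = 0).card ≤ p.natDegree := by
  calc (Finset.univ.filter fun t : F => p.eval t = 0).card
      ≤ p.roots.toFinset.card := by
        apply Finset.card_le_card
        intro t ht
        simp only [Finset.mem_filter] at ht
        simp [Multiset.mem_toFinset, Polynomial.mem_roots, hp, ht.2]
    _ ≤ Multiset.card p.roots := Multiset.toFinset_card_le _
    _ ≤ p.natDegree := p.card_roots'

open Polynomial in
omit [Fintype F] in
lemma aux_poly (m : ℕ) (hm : 2 ≤ m) (b : F) (u : F) :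
    ∃ p : Polynomial F, p ≠ 0 ∧ p.natDegree ≤ m ∧
      ∀ t : F, t ^ m + u * t = b ↔ p.eval t = 0 := by
  refine ⟨X ^ m + C u * X - C b, ?_, ?_, ?_⟩
  · intro h
    have h2 : (X ^ m + C u * X - C b : Polynomial F).coeff m = 0 := by rw [h]; simp
    have h3 : (C u * X : Polynomial F).coeff m = 0 := by
      rw [coeff_C_mul, coeff_X]
      simp only [mul_ite, mul_one, mul_zero, ite_eq_right_iff]
      intro h4; omega
    rw [coeff_sub, coeff_add, coeff_X_pow, h3, coeff_C, if_pos rfl, if_neg (by omega : ¬ m = 0)] at h2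
    simp at h2
  · apply le_trans (natDegree_sub_le _ _)
    simp only [sup_le_iff]
    refine ⟨le_trans (natDegree_add_le _ _) ?_, by simp⟩
    simp only [natDegree_X_pow, sup_le_iff, le_refl, true_and]
    apply le_trans (natDegree_C_mul_le _ _)
    simp; omega
  · intro t; simp [sub_eq_zero]

include hq2 hcard in
lemma Kcard : (Finset.univ.filter fun c : F => c ^ q = c).card ≤ q := by
  obtain ⟨p, hp0, hpd, hpe⟩ := aux_poly q hq2 (0 : F) (-1)
  have : (Finset.univ.filter fun c : F => c ^ q = c) ⊆
      (Finset.univ.filter fun t : F => p.eval t = 0) := by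
    intro c hc
    simp only [Finset.mem_filter, Finset.mem_univ, true_and] at *
    rw [← hpe]; linear_combination hc
  exact le_trans (Finset.card_le_card this) (le_trans (card_eval_zero_le p hp0) hpd)

include hq2 hcard hadd in
lemma trace_surj (c : F) (hc : c ^ q = c) : ∃ t : F, t + t ^ q = c := by
  classical
  set f : F → F := fun t => t + t ^ q with hf
  set K : Finset F := Finset.univ.filter fun c : F => c ^ q = c with hK
  have himg : Finset.univ.image f ⊆ K := by
    intro b hb
    simp only [Finset.mem_image, Finset.mem_univ, true_and, hf] at hb
    obtain ⟨t, rfl⟩ := hb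
    simp only [hK, Finset.mem_filter, Finset.mem_univ, true_and]
    rw [hadd, pow_qq hcard, add_comm]
  have hfib : ∀ b ∈ Finset.univ.image f, (Finset.univ.filter fun t => f t = b).card ≤ q := by
    intro b _
    obtain ⟨p, hp0, hpd, hpe⟩ := aux_poly q hq2 b (1 : F)
    refine le_trans (Finset.card_le_card ?_) (le_trans (card_eval_zero_le p hp0) hpd)
    intro t ht
    simp only [Finset.mem_filter, Finset.mem_univ, true_and, hf] at *
    rw [← hpe]; linear_combination ht
  have h1 : Fintype.card F ≤ q * (Finset.univ.image f).card :=
    Finset.card_le_mul_card_image Finset.univ q hfib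
  rw [hcard, sq] at h1
  have h2 : q ≤ (Finset.univ.image f).card := Nat.le_of_mul_le_mul_left h1 (by omega)
  have heq : Finset.univ.image f = K :=
    Finset.eq_of_subset_of_card_le himg (le_trans (Kcard hq2 hcard) h2)
  have : c ∈ K := by simp [hK, hc]
  rw [← heq] at this
  simp only [Finset.mem_image, Finset.mem_univ, true_and, hf] at this
  exact this

include hq2 hcard in
lemma norm_image : (Finset.univ.image (fun t : F => t ^ (q+1))) =
    (Finset.univ.filter fun c : F => c ^ q = c) := by
  set K : Finset F := Finset.univ.filter fun c : F => c ^ q = c with hK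
  have himg : Finset.univ.image (fun t : F => t ^ (q+1)) ⊆ K := by
    intro b hb
    simp only [Finset.mem_image, Finset.mem_univ, true_and] at hb
    obtain ⟨t, rfl⟩ := hb
    simp only [hK, Finset.mem_filter, Finset.mem_univ, true_and]
    rw [pow_succ, mul_pow, pow_qq hcard, mul_comm]
  have hfib : ∀ b ∈ Finset.univ.image (fun t : F => t ^ (q+1)),
      (Finset.univ.filter fun t : F => t ^ (q+1) = b).card ≤ q + 1 := by
    intro b _
    obtain ⟨p, hp0, hpd, hpe⟩ := aux_poly (q+1) (by omega) b (0 : F)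
    refine le_trans (Finset.card_le_card ?_) (le_trans (card_eval_zero_le p hp0) hpd)
    intro t ht
    simp only [Finset.mem_filter, Finset.mem_univ, true_and] at *
    rw [← hpe]; linear_combination ht
  have h1 : Fintype.card F ≤ (q+1) * (Finset.univ.image (fun t : F => t ^ (q+1))).card :=
    Finset.card_le_mul_card_image Finset.univ (q+1) hfib
  rw [hcard, sq] at h1
  set icard := (Finset.univ.image (fun t : F => t ^ (q+1))).card with hic
  have h2 : q ≤ icard := by
    by_contra hlt
    push_neg at hlt
    nlinarith [h1, hlt]
  exact Finset.eq_of_subset_of_card_le himg (le_trans (Kcard hq2 hcard) h2)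

include hq2 hcard in
lemma norm_exists (c : F) (hc : c ^ q = c) : ∃ t : F, t ^ (q+1) = c := by
  have : c ∈ Finset.univ.image (fun t : F => t ^ (q+1)) := by
    rw [norm_image hq2 hcard]; simp [hc]
  simpa using this

include hq2 hcard in
lemma norm_fiber_card (c : F) (hc : c ^ q = c) :
    (Finset.univ.filter fun t : F => t ^ (q+1) = c).card = if c = 0 then 1 else q + 1 := by
  classical
  have hzero : (Finset.univ.filter fun t : F => t ^ (q+1) = (0:F)).card = 1 := by
    have : (Finset.univ.filter fun t : F => t ^ (q+1) = (0:F)) = {0} := by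
      ext t
      simp [pow_eq_zero_iff, (by omega : q + 1 ≠ 0)]
    rw [this, Finset.card_singleton]
  by_cases hc0 : c = 0
  · subst hc0; simpa using hzero
  rw [if_neg hc0]
  -- every nonzero fiber has the same cardinality κ
  set κ := (Finset.univ.filter fun t : F => t ^ (q+1) = (1:F)).card with hκ
  have hfib : ∀ b : F, b ≠ 0 → b ^ q = b →
      (Finset.univ.filter fun t : F => t ^ (q+1) = b).card = κ := by
    intro b hb0 hb
    obtain ⟨t0, ht0⟩ := norm_exists hq2 hcard b hb
    have ht00 : t0 ≠ 0 := by
      intro h; rw [h, zero_pow (by omega : q + 1 ≠ 0)] at ht0; exact hb0 ht0.symm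
    rw [hκ]
    apply Finset.card_bij (fun u _ => t0⁻¹ * u)
    · intro u hu
      simp only [Finset.mem_filter, Finset.mem_univ, true_and] at *
      rw [mul_pow, hu, inv_pow, ht0, inv_mul_cancel₀ hb0]
    · intro u hu v hv h
      exact mul_left_cancel₀ (inv_ne_zero ht00) h
    · intro t ht
      simp only [Finset.mem_filter, Finset.mem_univ, true_and] at ht
      refine ⟨t0 * t, ?_, ?_⟩
      · simp only [Finset.mem_filter, Finset.mem_univ, true_and]
        rw [mul_pow, ht, ht0, mul_one]
      · rw [← mul_assoc, inv_mul_cancel₀ ht00, one_mul]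
  -- fiberwise count
  have hfib' : ∀ b ∈ Finset.univ.image (fun t : F => t ^ (q+1)),
      (Finset.univ.filter fun t : F => t ^ (q+1) = b).card ≤ q + 1 := by
    intro b _
    obtain ⟨p, hp0, hpd, hpe⟩ := aux_poly (q+1) (by omega) b (0 : F)
    refine le_trans (Finset.card_le_card ?_) (le_trans (card_eval_zero_le p hp0) hpd)
    intro t ht
    simp only [Finset.mem_filter, Finset.mem_univ, true_and] at *
    rw [← hpe]; linear_combination ht
  have hKcard : (Finset.univ.filter fun c : F => c ^ q = c).card = q := by
    have h1 : Fintype.card F ≤ (q+1) * (Finset.univ.image (fun t : F => t ^ (q+1))).card :=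
      Finset.card_le_mul_card_image Finset.univ (q+1) hfib'
    rw [hcard, sq, norm_image hq2 hcard] at h1
    have h3 := Kcard hq2 hcard (F := F)
    set kc := (Finset.univ.filter fun c : F => c ^ q = c).card
    nlinarith [h1, h3]
  set K : Finset F := Finset.univ.filter fun c : F => c ^ q = c with hKdef
  have hmemK : ∀ t : F, t ^ (q+1) ∈ K := by
    intro t
    simp only [hKdef, Finset.mem_filter, Finset.mem_univ, true_and]
    rw [pow_succ, mul_pow, pow_qq hcard, mul_comm]
  have hsum := Finset.card_eq_sum_card_fiberwise
    (f := fun t : F => t ^ (q+1)) (s := Finset.univ) (t := K) (fun t _ => hmemK t)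
  rw [Finset.card_univ, hcard, sq] at hsum
  have h0K : (0 : F) ∈ K := by
    simp only [hKdef, Finset.mem_filter, Finset.mem_univ, true_and]
    exact zero_pow_q hq2
  rw [← Finset.add_sum_erase K _ h0K, hzero] at hsum
  have herase : ∑ b ∈ K.erase 0, (Finset.univ.filter fun t : F => t ^ (q+1) = b).card
      = (q - 1) * κ := by
    rw [Finset.sum_congr rfl (fun b hb => ?_), Finset.sum_const, smul_eq_mul,
      Finset.card_erase_of_mem h0K, hKcard]
    obtain ⟨hb0, hbK⟩ := Finset.mem_erase.1 hb
    simp only [hKdef, Finset.mem_filter, Finset.mem_univ, true_and] at hbK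
    exact hfib b hb0 hbK
  rw [herase] at hsum
  rw [hfib c hc0 hc]
  obtain ⟨d, rfl⟩ : ∃ d, q = d + 2 := ⟨q - 2, by omega⟩
  have hd : d + 2 - 1 = d + 1 := by omega
  rw [hd] at hsum
  have : (d + 1) * κ = (d + 1) * (d + 3) := by nlinarith [hsum]
  have := Nat.eq_of_mul_eq_mul_left (by omega : 0 < d + 1) this
  omega

end counting

section niso

lemma herm_cons {m : ℕ} (t : F) (w : Fin m → F) :
    herm q (Fin.cons t w) (Fin.cons t w) = t ^ (q+1) + herm q w w := by
  rw [herm, Fin.sum_univ_succ]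
  simp only [Fin.cons_zero, Fin.cons_succ]
  rw [herm, pow_succ]
  ring

end niso

/-- number of isotropic-or-zero vectors for the standard form in dimension `m`. -/
noncomputable def Niso (q : ℕ) (F : Type*) [Field F] [Fintype F] (m : ℕ) : ℕ :=
  (Finset.univ.filter fun z : Fin m → F => herm q z z = 0).card

section niso2

lemma Niso_zero : Niso q F 0 = 1 := by
  rw [Niso]
  rw [Finset.filter_true_of_mem (fun z _ => by simp [herm])]
  simp

include hq2 hcard hadd in
lemma Niso_succ (m : ℕ) :
    Niso q F (m+1) + q * Niso q F m = (q+1) * q ^ (2*m) := by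
  classical
  have hcardsub : Niso q F (m+1) =
      Fintype.card {z : Fin (m+1) → F // herm q z z = 0} := by
    rw [Niso, Fintype.card_subtype]
  have hequiv : {z : Fin (m+1) → F // herm q z z = 0} ≃
      Σ w : Fin m → F, {t : F // t ^ (q+1) = - herm q w w} := by
    refine ⟨fun z => ⟨Fin.tail z.1, ⟨z.1 0, ?_⟩⟩, fun p => ⟨Fin.cons p.2.1 p.1, ?_⟩, ?_, ?_⟩
    · have := z.2
      rw [← Fin.cons_self_tail z.1, herm_cons] at this
      linear_combination this
    · rw [herm_cons, p.2.2]
      ring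
    · intro z
      ext i
      simp [Fin.cons_self_tail]
    · intro p
      refine Sigma.ext ?_ ?_
      · simp [Fin.tail_cons]
      · simp [Fin.cons_zero]
        exact HEq.rfl
  have h1 : Niso q F (m+1) = ∑ w : Fin m → F,
      Fintype.card {t : F // t ^ (q+1) = - herm q w w} := by
    rw [hcardsub, Fintype.card_congr hequiv, Fintype.card_sigma]
  have h2 : ∀ w : Fin m → F, Fintype.card {t : F // t ^ (q+1) = - herm q w w}
      = if herm q w w = 0 then 1 else q + 1 := by
    intro w
    rw [Fintype.card_subtype]
    have hfix : (- herm q w w) ^ q = - herm q w w := by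
      rw [neg_pow_q hq2 hadd, herm_conj hq2 hcard hadd]
    rw [norm_fiber_card hq2 hcard _ hfix]
    simp [neg_eq_zero]
  rw [h1]
  rw [Finset.sum_congr rfl (fun w _ => h2 w)]
  rw [Finset.sum_ite, Finset.sum_const, Finset.sum_const]
  simp only [smul_eq_mul, mul_one]
  have hA : (Finset.univ.filter fun w : Fin m → F => herm q w w = 0).card = Niso q F m := rfl
  have hAB : (Finset.univ.filter fun w : Fin m → F => herm q w w = 0).card +
      (Finset.univ.filter fun w : Fin m → F => ¬ herm q w w = 0).card
      = q ^ (2*m) := by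
    rw [Finset.card_filter_add_card_filter_not]
    rw [Finset.card_univ, Fintype.card_fun, Fintype.card_fin, hcard, ← pow_mul]
  set A := (Finset.univ.filter fun w : Fin m → F => herm q w w = 0).card
  set B := (Finset.univ.filter fun w : Fin m → F => ¬ herm q w w = 0).card
  rw [hA] at *
  rw [← hAB]
  ring

include hq2 hcard hadd in
lemma Niso_closed (m : ℕ) : (Niso q F (m+1) : ℤ) =
    q ^ (2*m+1) + (-1) ^ (m+1) * ((q:ℤ) ^ (m+1) - q ^ m) := by
  induction m with
  | zero =>
      have h := Niso_succ hq2 hcard hadd (F := F) 0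
      rw [Niso_zero] at h
      norm_num at h
      have : Niso q F 1 = 1 := by omega
      rw [this]
      push_cast
      ring
  | succ m ih =>
      have h := Niso_succ hq2 hcard hadd (F := F) (m+1)
      have h' : (Niso q F (m+2) : ℤ) + q * Niso q F (m+1) = (q+1) * q ^ (2*(m+1)) := by
        exact_mod_cast congrArg (Nat.cast : ℕ → ℤ) h
      rw [ih] at h'
      have : (Niso q F (m+2) : ℤ) = (q+1) * q ^ (2*(m+1))
          - q * (q ^ (2*m+1) + (-1) ^ (m+1) * ((q:ℤ) ^ (m+1) - q ^ m)) := by linarith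
      rw [this]
      ring

end niso2

section gs

variable {n : ℕ}

/-- `z ↦ herm q z v` as a linear map (the first slot is linear). -/
def hermL (q : ℕ) {n : ℕ} {F : Type*} [Field F] (v : Fin n → F) :
    (Fin n → F) →ₗ[F] F where
  toFun z := herm q z v
  map_add' x y := by simp [herm, add_mul, Finset.sum_add_distrib]
  map_smul' c x := by simp [herm, Finset.mul_sum, mul_assoc]

@[simp] lemma hermL_apply (v z : Fin n → F) : hermL q v z = herm q z v := rfl

include hq2 hcard hadd in
lemma aniso_exists (W : Submodule F (Fin n → F))
    (hnd : ∀ w ∈ W, w ≠ 0 → ∃ u ∈ W, herm q u w ≠ 0)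
    (w0 : Fin n → F) (hw0 : w0 ∈ W) (hw00 : w0 ≠ 0) :
    ∃ v ∈ W, herm q v v ≠ 0 := by
  by_cases h0 : herm q w0 w0 ≠ 0
  · exact ⟨w0, hw0, h0⟩
  push_neg at h0
  obtain ⟨u, hu, hub⟩ := hnd w0 hw0 hw00
  set b := herm q u w0 with hb
  have hfix : (1 - herm q u u) ^ q = 1 - herm q u u := by
    rw [sub_pow_q hq2 hadd, one_pow, herm_conj hq2 hcard hadd]
  obtain ⟨t, ht⟩ := trace_surj hq2 hcard hadd _ hfix
  set a := t * (b ^ q)⁻¹ with ha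
  refine ⟨u + a • w0, W.add_mem hu (W.smul_mem a hw0), ?_⟩
  have haq : a ^ q = t ^ q * b⁻¹ := by
    rw [ha, mul_pow, ← inv_pow, pow_qq hcard]
  have hbq : b ^ q ≠ 0 := pow_ne_zero _ hub
  have h1 : herm q w0 u = b ^ q := by rw [hb, herm_conj hq2 hcard hadd]
  rw [herm_add_left, herm_add_right hq2 hadd, herm_add_right hq2 hadd,
    herm_smul_right, herm_smul_left, herm_smul_left, herm_smul_right,
    h1, h0, haq, ha, ← hb]
  have e1 : t ^ q * b⁻¹ * b = t ^ q := by field_simp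
  have e2 : t * (b ^ q)⁻¹ * b ^ q = t := by field_simp
  rw [mul_zero, mul_zero, add_zero, e1, e2]
  intro hcon
  rw [show herm q u u + t ^ q + t = 1 from by linear_combination ht] at hcon
  exact one_ne_zero hcon

include hq2 hcard hadd in
lemma unit_exists (W : Submodule F (Fin n → F))
    (hnd : ∀ w ∈ W, w ≠ 0 → ∃ u ∈ W, herm q u w ≠ 0)
    (w0 : Fin n → F) (hw0 : w0 ∈ W) (hw00 : w0 ≠ 0) :
    ∃ e ∈ W, herm q e e = 1 := by
  obtain ⟨v, hv, hv0⟩ := aniso_exists hq2 hcard hadd W hnd w0 hw0 hw00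
  have hfix : ((herm q v v)⁻¹) ^ q = (herm q v v)⁻¹ := by
    rw [inv_pow, herm_conj hq2 hcard hadd]
  obtain ⟨s, hs⟩ := norm_exists hq2 hcard _ hfix
  refine ⟨s • v, W.smul_mem s hv, ?_⟩
  rw [herm_smul_left, herm_smul_right, ← mul_assoc, ← pow_succ', hs,
    inv_mul_cancel₀ hv0]

include hq2 hcard hadd in
lemma gs_aux : ∀ (N : ℕ) (W : Submodule F (Fin n → F)),
    Module.finrank F W = N →
    (∀ w ∈ W, w ≠ 0 → ∃ u ∈ W, herm q u w ≠ 0) →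
    ∃ (m : ℕ) (e : Fin m → (Fin n → F)),
      (∀ i, e i ∈ W) ∧
      (∀ i j, herm q (e i) (e j) = if i = j then 1 else 0) ∧
      (∀ w ∈ W, w = ∑ i, herm q w (e i) • e i) := by
  intro N
  induction N using Nat.strong_induction_on with
  | _ N IH =>
    intro W hrank hnd
    by_cases hbot : ∀ w ∈ W, w = 0
    · refine ⟨0, Fin.elim0, fun i => i.elim0, fun i => i.elim0, fun w hw => ?_⟩
      rw [hbot w hw]
      simp
    · push_neg at hbot
      obtain ⟨w0, hw0, hw00⟩ := hbot
      obtain ⟨e0, he0W, he0⟩ := unit_exists hq2 hcard hadd W hnd w0 hw0 hw00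
      set W' : Submodule F (Fin n → F) := W ⊓ LinearMap.ker (hermL q e0) with hW'
      have hW'le : W' ≤ W := inf_le_left
      have hmemW' : ∀ z, z ∈ W' ↔ z ∈ W ∧ herm q z e0 = 0 := by
        intro z
        simp [hW', LinearMap.mem_ker]
      have hnd' : ∀ w ∈ W', w ≠ 0 → ∃ u ∈ W', herm q u w ≠ 0 := by
        intro w hw hw0'
        obtain ⟨hwW, hwe0⟩ := (hmemW' w).1 hw
        obtain ⟨u0, hu0, hu0w⟩ := hnd w hwW hw0'
        refine ⟨u0 - (herm q u0 e0) • e0, ?_, ?_⟩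
        · rw [hmemW']
          refine ⟨W.sub_mem hu0 (W.smul_mem _ he0W), ?_⟩
          rw [herm_sub_left, herm_smul_left, he0, mul_one, sub_self]
        · rw [herm_sub_left, herm_smul_left]
          rw [herm_eq_zero_comm hq2 hcard hadd _ _ hwe0, mul_zero, sub_zero]
          exact hu0w
      have hlt : W' < W := by
        refine lt_of_le_of_ne hW'le ?_
        intro hcon
        have : e0 ∈ W' := hcon ▸ he0W
        rw [hmemW'] at this
        rw [he0] at this
        exact one_ne_zero this.2
      have hfrlt : Module.finrank F W' < N := by
        rw [← hrank]
        exact Submodule.finrank_lt_finrank_of_lt hlt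
      obtain ⟨m', e', he'W, he'orth, he'dec⟩ := IH _ hfrlt W' rfl hnd'
      refine ⟨m' + 1, Fin.cons e0 e', ?_, ?_, ?_⟩
      · intro i
        refine Fin.cases ?_ ?_ i
        · simpa using he0W
        · intro j
          simpa using hW'le (he'W j)
      · intro i j
        have he0e' : ∀ j, herm q e0 (e' j) = 0 := by
          intro j
          have := ((hmemW' (e' j)).1 (he'W j)).2
          exact herm_eq_zero_comm hq2 hcard hadd _ _ this
        have he'e0 : ∀ j, herm q (e' j) e0 = 0 := fun j =>
          ((hmemW' (e' j)).1 (he'W j)).2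
        refine Fin.cases ?_ ?_ i
        · refine Fin.cases ?_ ?_ j
          · simpa using he0
          · intro j'
            simp [he0e' j', (Fin.succ_ne_zero j').symm]
        · intro i'
          refine Fin.cases ?_ ?_ j
          · simp [he'e0 i', Fin.succ_ne_zero i']
          · intro j'
            simp only [Fin.cons_succ]
            rw [he'orth i' j']
            simp [Fin.succ_inj]
      · intro w hw
        set c0 := herm q w e0 with hc0
        have hw' : w - c0 • e0 ∈ W' := by
          rw [hmemW']
          refine ⟨W.sub_mem hw (W.smul_mem _ he0W), ?_⟩
          rw [herm_sub_left, herm_smul_left, he0, mul_one, sub_self]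
        have hdec := he'dec _ hw'
        have hcoef : ∀ i, herm q (w - c0 • e0) (e' i) = herm q w (e' i) := by
          intro i
          have h2 := ((hmemW' (e' i)).1 (he'W i)).2
          rw [herm_sub_left, herm_smul_left,
            herm_eq_zero_comm hq2 hcard hadd _ _ h2, mul_zero, sub_zero]
        rw [Fin.sum_univ_succ]
        simp only [Fin.cons_zero, Fin.cons_succ]
        rw [← hc0]
        have : w = c0 • e0 + (w - c0 • e0) := by ring_nf
        nth_rewrite 1 [this]
        congr 1
        rw [hdec]
        exact Finset.sum_congr rfl fun i _ => by rw [hcoef i]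

include hq2 hcard hadd in
lemma card_iso_submodule (W : Submodule F (Fin n → F))
    (hnd : ∀ w ∈ W, w ≠ 0 → ∃ u ∈ W, herm q u w ≠ 0) :
    (Finset.univ.filter fun w : Fin n → F => w ∈ W ∧ herm q w w = 0).card
      = Niso q F (Module.finrank F W) := by
  classical
  obtain ⟨m, e, hmem, horth, hdec⟩ :=
    gs_aux hq2 hcard hadd (Module.finrank F W) W rfl hnd
  set φ : (Fin m → F) → (Fin n → F) := fun c => ∑ i, c i • e i with hφ
  have hcoef : ∀ (c : Fin m → F) (j : Fin m), herm q (φ c) (e j) = c j := by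
    intro c j
    rw [hφ, herm_sum_left]
    rw [Finset.sum_congr rfl (fun i _ => by rw [herm_smul_left, horth i j])]
    simp
  have hphimem : ∀ c, φ c ∈ W := fun c =>
    Submodule.sum_mem _ (fun i _ => W.smul_mem _ (hmem i))
  have hherm : ∀ c, herm q (φ c) (φ c) = herm q c c := by
    intro c
    nth_rewrite 2 [hφ]
    rw [herm_sum_right hq2 hadd]
    rw [Finset.sum_congr rfl (fun j _ => by rw [herm_smul_right, hcoef])]
    rw [herm]
    exact Finset.sum_congr rfl fun j _ => mul_comm _ _
  have hinj : Function.Injective φ := by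
    intro c d h
    funext j
    rw [← hcoef c j, ← hcoef d j, h]
  -- bijection onto W
  have hbij : Function.Bijective (fun c : Fin m → F => (⟨φ c, hphimem c⟩ : W)) := by
    constructor
    · intro c d h
      exact hinj (congrArg Subtype.val h)
    · rintro ⟨w, hw⟩
      exact ⟨fun i => herm q w (e i), by
        apply Subtype.ext
        exact (hdec w hw).symm⟩
  have hcardW : Fintype.card W = (q^2) ^ m := by
    rw [← Fintype.card_congr (Equiv.ofBijective _ hbij)]
    rw [Fintype.card_fun, Fintype.card_fin, hcard]
  have hm : m = Module.finrank F W := by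
    have h2 : Fintype.card W = (q^2) ^ (Module.finrank F W) := by
      rw [Module.card_eq_pow_finrank (K := F), hcard]
    have := hcardW.symm.trans h2
    exact Nat.pow_right_injective (by nlinarith) this
  -- bijection on isotropic subtypes
  have hbij2 : Function.Bijective
      (fun c : {c : Fin m → F // herm q c c = 0} =>
        (⟨φ c.1, hphimem c.1, by rw [hherm]; exact c.2⟩ :
          {w : Fin n → F // w ∈ W ∧ herm q w w = 0})) := by
    constructor
    · intro c d h
      exact Subtype.ext (hinj (congrArg Subtype.val h))
    · rintro ⟨w, hwW, hw0⟩
      refine ⟨⟨fun i => herm q w (e i), ?_⟩, Subtype.ext (hdec w hwW).symm⟩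
      have hwphi : φ (fun i => herm q w (e i)) = w := (hdec w hwW).symm
      rw [← hherm]
      rw [hwphi]
      exact hw0
  have hcard2 := Fintype.card_congr (Equiv.ofBijective _ hbij2)
  rw [Fintype.card_subtype, Fintype.card_subtype] at hcard2
  rw [← hm, ← hcard2]
  rfl

omit [Fintype F] in
lemma herm_single (x : Fin n → F) (i : Fin n) (hq0 : q ≠ 0) :
    herm q x (Pi.single i 1) = x i := by
  rw [herm, Finset.sum_eq_single i]
  · simp
  · intro j _ hj
    rw [Pi.single_eq_of_ne hj, zero_pow hq0, mul_zero]
  · simp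

omit [Fintype F] in
lemma herm_single_left (w : Fin n → F) (i : Fin n) :
    herm q (Pi.single i 1) w = (w i) ^ q := by
  rw [herm, Finset.sum_eq_single i]
  · simp
  · intro j _ hj
    rw [Pi.single_eq_of_ne hj, zero_mul]
  · simp

end gs

end HermAux


open HermAux in
/-- For `n ≥ 4`, the valency of the relation `T`: the number of isotropic vectors `z` with
`⟨x,z⟩ = 0` that are not scalar multiples of `x` equals `q²·|Φ(n−2,q)|`. -/
theorem valency_T
    (q : ℕ) (hq : IsPrimePow q) (n : ℕ) (hn : 4 ≤ n)
    (F : Type*) [Field F] [Fintype F] (hF : Fintype.card F = q ^ 2)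
    (x : Fin n → F) (hx : Isotropic q x) :
    (Nat.card {z : Fin n → F //
        Isotropic q z ∧ herm q x z = 0 ∧ ∀ c : F, z ≠ c • x} : ℤ) =
      (q : ℤ) ^ 2 * (((q : ℤ) ^ (n - 2) - (-1) ^ (n - 2)) *
        ((q : ℤ) ^ (n - 3) - (-1) ^ (n - 3))) := by
  classical
  obtain ⟨hx0, hxx⟩ := hx
  have hq2 : 2 ≤ q := hq.two_le
  have hq0 : q ≠ 0 := by omega
  have hcard : Fintype.card F = q ^ 2 := hF
  have hadd : ∀ a b : F, (a + b) ^ q = a ^ q + b ^ q := hadd_of_card hq hcard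
  -- step 1 : a vector y0 with ⟨x,y0⟩ = 1
  obtain ⟨i, hxi⟩ := Function.ne_iff.1 hx0
  rw [Pi.zero_apply] at hxi
  obtain ⟨y0, hxy0⟩ : ∃ y0 : Fin n → F, herm q x y0 = 1 := by
    refine ⟨(((x i)⁻¹) ^ q) • (Pi.single i 1 : Fin n → F), ?_⟩
    rw [herm_smul_right, herm_single x i hq0, pow_qq hcard, inv_mul_cancel₀ hxi]
  -- step 2 : hyperbolic partner y
  obtain ⟨y, hxy, hyx, hyy⟩ : ∃ y : Fin n → F,
      herm q x y = 1 ∧ herm q y x = 1 ∧ herm q y y = 0 := by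
    have hy0x : herm q y0 x = 1 := by
      rw [← herm_conj hq2 hcard hadd x y0, hxy0, one_pow]
    have hfixy0 : (- herm q y0 y0) ^ q = - herm q y0 y0 := by
      rw [neg_pow_q hq2 hadd, herm_conj hq2 hcard hadd]
    obtain ⟨t, ht⟩ := trace_surj hq2 hcard hadd _ hfixy0
    refine ⟨y0 + t • x, ?_, ?_, ?_⟩
    · rw [herm_add_right hq2 hadd, herm_smul_right, hxy0, hxx, mul_zero, add_zero]
    · rw [herm_add_left, herm_smul_left, hy0x, hxx, mul_zero, add_zero]
    · rw [herm_add_left, herm_add_right hq2 hadd, herm_add_right hq2 hadd]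
      simp only [herm_smul_left, herm_smul_right]
      rw [hy0x, hxy0, hxx]
      linear_combination ht
  -- step 3 : the submodule W
  set L : (Fin n → F) →ₗ[F] F × F := (hermL q x).prod (hermL q y) with hL
  set W : Submodule F (Fin n → F) := LinearMap.ker L with hW
  have hmemW : ∀ z, z ∈ W ↔ herm q z x = 0 ∧ herm q z y = 0 := by
    intro z
    rw [hW, LinearMap.mem_ker, hL, LinearMap.prod_apply]
    simp [Prod.ext_iff]
  -- step 4 : finrank W = n - 2
  have hsurj : Function.Surjective L := by
    rintro ⟨a, b⟩
    refine ⟨b • x + a • y, ?_⟩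
    rw [hL, LinearMap.prod_apply]
    simp only [Function.prod, hermL_apply]
    rw [herm_add_left, herm_add_left, herm_smul_left, herm_smul_left,
      herm_smul_left, herm_smul_left, hxx, hyx, hxy, hyy]
    simp
  have hrankW : Module.finrank F W = n - 2 := by
    have h1 := LinearMap.finrank_range_add_finrank_ker L
    rw [LinearMap.range_eq_top.2 hsurj, finrank_top] at h1
    have h2 : Module.finrank F (F × F) = 2 := by
      simp [Module.finrank_prod]
    have h3 : Module.finrank F (Fin n → F) = n := by
      simp [Module.finrank_pi]
    rw [h2, h3] at h1
    rw [← hW] at h1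
    omega
  -- step 5 : W nondegenerate
  have hnd : ∀ w ∈ W, w ≠ 0 → ∃ u ∈ W, herm q u w ≠ 0 := by
    intro w hw hw0
    obtain ⟨hwx, hwy⟩ := (hmemW w).1 hw
    obtain ⟨j, hwj⟩ := Function.ne_iff.1 hw0
    rw [Pi.zero_apply] at hwj
    obtain ⟨u0, hu0w⟩ : ∃ u0 : Fin n → F, herm q u0 w = 1 := by
      refine ⟨(((w j) ^ q)⁻¹) • (Pi.single j 1 : Fin n → F), ?_⟩
      rw [herm_smul_left, herm_single_left, inv_mul_cancel₀ (pow_ne_zero _ hwj)]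
    refine ⟨u0 - (herm q u0 y) • x - (herm q u0 x) • y, ?_, ?_⟩
    · rw [hmemW]
      constructor
      · rw [herm_sub_left, herm_sub_left, herm_smul_left, herm_smul_left,
          hxx, hyx, mul_zero, sub_zero, mul_one]
        ring
      · rw [herm_sub_left, herm_sub_left, herm_smul_left, herm_smul_left,
          hxy, hyy, mul_zero, sub_zero, mul_one]
        ring
    · have hxw : herm q x w = 0 := herm_eq_zero_comm hq2 hcard hadd _ _ hwx
      have hyw : herm q y w = 0 := herm_eq_zero_comm hq2 hcard hadd _ _ hwy
      rw [herm_sub_left, herm_sub_left, herm_smul_left, herm_smul_left,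
        hxw, hyw, mul_zero, mul_zero, sub_zero, sub_zero, hu0w]
      exact one_ne_zero
  -- step 6 : the count over W
  have hWcount : (Finset.univ.filter fun w : Fin n → F =>
      w ∈ W ∧ herm q w w = 0).card = Niso q F (n - 2) := by
    rw [card_iso_submodule hq2 hcard hadd W hnd, hrankW]
  -- step 7 : the bijection
  have hequiv : {z : Fin n → F //
        Isotropic q z ∧ herm q x z = 0 ∧ ∀ c : F, z ≠ c • x} ≃
      F × {w : Fin n → F // w ∈ W ∧ herm q w w = 0 ∧ w ≠ 0} := by
    refine ⟨fun z => ⟨herm q z.1 y, ⟨z.1 - (herm q z.1 y) • x, ?_, ?_, ?_⟩⟩,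
      fun p => ⟨p.1 • x + p.2.1, ?_, ?_, ?_⟩, ?_, ?_⟩
    · obtain ⟨⟨hz0, hzz⟩, hxz, hznc⟩ := z.2
      have hzx : herm q z.1 x = 0 := herm_eq_zero_comm hq2 hcard hadd _ _ hxz
      rw [hmemW]
      constructor
      · rw [herm_sub_left, herm_smul_left, hxx, mul_zero, sub_zero, hzx]
      · rw [herm_sub_left, herm_smul_left, hxy, mul_one, sub_self]
    · obtain ⟨⟨hz0, hzz⟩, hxz, hznc⟩ := z.2
      have hzx : herm q z.1 x = 0 := herm_eq_zero_comm hq2 hcard hadd _ _ hxz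
      rw [herm_sub_left, herm_sub_right hq2 hadd, herm_sub_right hq2 hadd,
        herm_smul_left, herm_smul_right, herm_smul_right, herm_smul_left,
        hzz, hzx, hxz, hxx, mul_zero, mul_zero, mul_zero]
      ring
    · obtain ⟨⟨hz0, hzz⟩, hxz, hznc⟩ := z.2
      intro hcon
      exact hznc (herm q z.1 y) (by rwa [sub_eq_zero] at hcon)
    · -- Isotropic (a • x + w)
      obtain ⟨hwW, hww, hw0⟩ := p.2.2
      obtain ⟨hwx, hwy⟩ := (hmemW p.2.1).1 hwW
      have hxw : herm q x p.2.1 = 0 := herm_eq_zero_comm hq2 hcard hadd _ _ hwx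
      constructor
      · intro hcon
        have hw : p.2.1 = (-p.1) • x := by
          rw [neg_smul]
          exact eq_neg_of_add_eq_zero_left (by rwa [add_comm] at hcon)
        have h2 : herm q p.2.1 y = -p.1 := by
          rw [hw, herm_smul_left, hxy, mul_one]
        rw [hwy] at h2
        have hp1 : p.1 = 0 := by linear_combination h2
        rw [hp1, neg_zero, zero_smul] at hw
        exact hw0 hw
      · rw [herm_add_left, herm_add_right hq2 hadd, herm_add_right hq2 hadd,
          herm_smul_left, herm_smul_right, herm_smul_right, herm_smul_left,
          hxx, hxw, hwx, hww]
        ring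
    · -- herm x z = 0
      obtain ⟨hwW, hww, hw0⟩ := p.2.2
      obtain ⟨hwx, hwy⟩ := (hmemW p.2.1).1 hwW
      have hxw : herm q x p.2.1 = 0 := herm_eq_zero_comm hq2 hcard hadd _ _ hwx
      rw [herm_add_right hq2 hadd, herm_smul_right, hxx, hxw, mul_zero, add_zero]
    · -- not a multiple of x
      obtain ⟨hwW, hww, hw0⟩ := p.2.2
      obtain ⟨hwx, hwy⟩ := (hmemW p.2.1).1 hwW
      intro c hcon
      have hwc : p.2.1 = (c - p.1) • x := by
        rw [sub_smul]
        rw [eq_sub_iff_add_eq, add_comm]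
        exact hcon
      have h2 : herm q p.2.1 y = (c - p.1) * 1 := by
        rw [hwc, herm_smul_left, hxy]
      rw [hwy, mul_one] at h2
      have hc : c = p.1 := by linear_combination -h2
      rw [hc, sub_self, zero_smul] at hwc
      exact hw0 hwc
    · intro z
      apply Subtype.ext
      simp
    · intro p
      have hwy := ((hmemW p.2.1).1 p.2.2.1).2
      have ha : herm q (p.1 • x + p.2.1) y = p.1 := by
        rw [herm_add_left, herm_smul_left, hxy, hwy, mul_one, add_zero]
      refine Prod.ext ?_ (Subtype.ext ?_)
      · exact ha
      · simp only
        rw [ha]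
        abel
  -- step 8 : cardinalities
  have hT1 : (0 : Fin n → F) ∈ (Finset.univ.filter fun w : Fin n → F =>
      w ∈ W ∧ herm q w w = 0) := by
    simp only [Finset.mem_filter, Finset.mem_univ, true_and]
    exact ⟨W.zero_mem, herm_zero_left 0⟩
  have hTcard : (Finset.univ.filter fun w : Fin n → F =>
      w ∈ W ∧ herm q w w = 0 ∧ w ≠ 0).card = Niso q F (n-2) - 1 := by
    have herase : (Finset.univ.filter fun w : Fin n → F =>
        w ∈ W ∧ herm q w w = 0 ∧ w ≠ 0)
        = ((Finset.univ.filter fun w : Fin n → F =>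
            w ∈ W ∧ herm q w w = 0).erase 0) := by
      ext w
      simp only [Finset.mem_erase, Finset.mem_filter, Finset.mem_univ, true_and]
      tauto
    rw [herase, Finset.card_erase_of_mem hT1, hWcount]
  have hNpos : 1 ≤ Niso q F (n - 2) := by
    rw [← hWcount]
    exact Finset.card_pos.2 ⟨0, hT1⟩
  have hsub : Nat.card {w : Fin n → F // w ∈ W ∧ herm q w w = 0 ∧ w ≠ 0}
      = (Finset.univ.filter fun w : Fin n → F =>
          w ∈ W ∧ herm q w w = 0 ∧ w ≠ 0).card := by
    rw [Nat.card_eq_fintype_card]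
    exact Fintype.card_subtype _
  have hcardS : Nat.card {z : Fin n → F //
      Isotropic q z ∧ herm q x z = 0 ∧ ∀ c : F, z ≠ c • x}
      = q ^ 2 * (Niso q F (n - 2) - 1) := by
    rw [Nat.card_congr hequiv, Nat.card_prod, Nat.card_eq_fintype_card, hcard,
      hsub, hTcard]
  -- step 9 : arithmetic
  obtain ⟨m, hm3, hm2⟩ : ∃ m, n - 3 = m ∧ n - 2 = m + 1 := ⟨n - 3, rfl, by omega⟩
  rw [hm2] at hcardS hNpos
  rw [hcardS, hm3, hm2]
  have hclosed := Niso_closed hq2 hcard hadd (F := F) m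
  have hcast : ((q ^ 2 * (Niso q F (m+1) - 1) : ℕ) : ℤ)
      = (q:ℤ) ^ 2 * ((Niso q F (m+1) : ℤ) - 1) := by
    push_cast [Nat.cast_sub hNpos]
    ring
  rw [hcast, hclosed]
  have hs2 : ((-1 : ℤ) ^ m) ^ 2 = 1 := by
    rw [← pow_mul, mul_comm, pow_mul]
    norm_num
  linear_combination (q:ℤ)^2 * hs2
end

section
/- For every prime power q and every integer n ≥ 4, for every isotropic vector x ∈ F^n and every λ ∈ F^×, the number of isotropic vectors y ∈ F^n with ⟨x,y⟩ = λ equals q^{2n−3}. -/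
open Matrix

section Helpers

variable {q n : ℕ} {F : Type*} [Field F]

lemma herm_add_left (x y z : Fin n → F) :
    herm q (x + y) z = herm q x z + herm q y z := by
  simp [herm, add_mul, Finset.sum_add_distrib]

lemma herm_add_right (hadd : ∀ a b : F, (a + b) ^ q = a ^ q + b ^ q) (x y z : Fin n → F) :
    herm q x (y + z) = herm q x y + herm q x z := by
  simp [herm, hadd, mul_add, Finset.sum_add_distrib]

lemma herm_sub_right (hsub : ∀ a b : F, (a - b) ^ q = a ^ q - b ^ q) (x y z : Fin n → F) :
    herm q x (y - z) = herm q x y - herm q x z := by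
  simp [herm, hsub, mul_sub, Finset.sum_sub_distrib]

lemma herm_sub_left (x y z : Fin n → F) :
    herm q (x - y) z = herm q x z - herm q y z := by
  simp [herm, sub_mul, Finset.sum_sub_distrib]

lemma herm_smul_left (t : F) (x y : Fin n → F) :
    herm q (t • x) y = t * herm q x y := by
  simp [herm, Finset.mul_sum, mul_assoc]

lemma herm_smul_right (t : F) (x y : Fin n → F) :
    herm q x (t • y) = t ^ q * herm q x y := by
  simp [herm, mul_pow, Finset.mul_sum, mul_left_comm]

lemma herm_conj (σ : F →+* F) (hσ : ∀ a : F, σ a = a ^ q) (h2 : ∀ a : F, a ^ (q * q) = a)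
    (x y : Fin n → F) : herm q y x = (herm q x y) ^ q := by
  simp only [herm]
  conv_rhs => rw [← hσ, map_sum]
  refine Finset.sum_congr rfl fun i _ => ?_
  rw [_root_.map_mul, _root_.map_pow, hσ, hσ, ← pow_mul, h2, mul_comm]

lemma fiber_count {G H : Type*} [Fintype G] [Fintype H] [DecidableEq H]
    [AddCommGroup G] [AddCommGroup H] (f : G → H)
    (hadd : ∀ a b, f (a + b) = f a + f b) (hsurj : ∀ h : H, ∃ g, f g = h) (b : H) :
    Fintype.card H * (Finset.univ.filter fun a => f a = b).card = Fintype.card G := by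
  classical
  have hsub : ∀ a b, f (a - b) = f a - f b := by
    intro a b
    have h := hadd (a - b) b
    rw [sub_add_cancel] at h
    rw [eq_sub_iff_add_eq]
    exact h.symm
  have key : ∀ b' : H, (Finset.univ.filter fun a => f a = b').card
      = (Finset.univ.filter fun a => f a = b).card := by
    intro b'
    obtain ⟨g0, hg0⟩ := hsurj (b - b')
    refine Finset.card_bij' (fun a _ => a + g0) (fun a _ => a - g0) ?_ ?_ ?_ ?_
    · intro a ha
      simp only [Finset.mem_filter, Finset.mem_univ, true_and] at ha ⊢
      rw [hadd, ha, hg0]; abel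
    · intro a ha
      simp only [Finset.mem_filter, Finset.mem_univ, true_and] at ha ⊢
      rw [hsub, ha, hg0]; abel
    · intro a _; simp
    · intro a _; simp
  have h1 : Fintype.card G = ∑ b' : H, (Finset.univ.filter fun a => f a = b').card := by
    rw [← Finset.card_univ]
    exact Finset.card_eq_sum_card_fiberwise (fun a _ => Finset.mem_univ (f a))
  rw [h1, Finset.sum_congr rfl fun b' _ => key b', Finset.sum_const, Finset.card_univ,
    smul_eq_mul]

lemma roots_card_le {F : Type*} [Field F] [Fintype F] [DecidableEq F]
    {q : ℕ} (hq2 : 2 ≤ q) (d : F) :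
    (Finset.univ.filter fun s : F => s ^ q + d * s = 0).card ≤ q := by
  set P : Polynomial F := Polynomial.X ^ q + Polynomial.C d * Polynomial.X with hPdef
  have hcoeff : P.coeff q = 1 := by
    have hq1 : q ≠ 1 := by omega
    simp [hPdef, Polynomial.coeff_X_pow, Polynomial.coeff_X, hq1, Ne.symm hq1]
  have hP0 : P ≠ 0 := by
    intro h
    rw [h] at hcoeff
    simp at hcoeff
  have hdeg : P.natDegree ≤ q := by
    refine le_trans (Polynomial.natDegree_add_le _ _) ?_
    have h1 : (Polynomial.C d * Polynomial.X : Polynomial F).natDegree ≤ 1 :=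
      le_trans (Polynomial.natDegree_C_mul_le _ _) Polynomial.natDegree_X_le
    simp only [Polynomial.natDegree_X_pow]
    omega
  have hsubset : (Finset.univ.filter fun s : F => s ^ q + d * s = 0) ⊆ P.roots.toFinset := by
    intro s hs
    rw [Multiset.mem_toFinset, Polynomial.mem_roots hP0]
    simp only [Finset.mem_filter, Finset.mem_univ, true_and] at hs
    simpa [Polynomial.IsRoot, hPdef] using hs
  calc (Finset.univ.filter fun s : F => s ^ q + d * s = 0).card
      ≤ P.roots.toFinset.card := Finset.card_le_card hsubset
    _ ≤ Multiset.card P.roots := Multiset.toFinset_card_le _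
    _ ≤ P.natDegree := Polynomial.card_roots' P
    _ ≤ q := hdeg

lemma psi_count {F : Type*} [Field F] [Fintype F] [DecidableEq F]
    {q : ℕ} (hq2 : 2 ≤ q) (hF : Fintype.card F = q ^ 2)
    (hadd : ∀ a b : F, (a + b) ^ q = a ^ q + b ^ q)
    (h2 : ∀ a : F, a ^ (q * q) = a)
    (c : F) (hc : c ^ q = c) :
    (Finset.univ.filter fun s : F => s + s ^ q = c).card = q := by
  have hq0 : 0 < q := by omega
  set N := Finset.univ.filter fun s : F => s + s ^ q = 0 with hNdef
  set K := Finset.univ.filter fun c : F => c ^ q = c with hKdef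
  have hsub : ∀ a b : F, (a - b) ^ q = a ^ q - b ^ q := by
    intro a b
    have h := hadd (a - b) b
    rw [sub_add_cancel] at h
    rw [eq_sub_iff_add_eq]
    exact h.symm
  -- the value map lands in K
  have hmemK : ∀ s : F, s + s ^ q ∈ K := by
    intro s
    simp only [hKdef, Finset.mem_filter, Finset.mem_univ, true_and]
    rw [hadd, ← pow_mul, h2]
    ring
  -- fibers have card ≤ N.card, with equality when nonempty
  have hfib : ∀ c' : F, ∀ s0 : F, s0 + s0 ^ q = c' →
      (Finset.univ.filter fun s : F => s + s ^ q = c').card = N.card := by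
    intro c' s0 hs0
    refine Finset.card_bij' (fun s _ => s - s0) (fun s _ => s + s0) ?_ ?_ ?_ ?_
    · intro a ha
      simp only [hNdef, Finset.mem_filter, Finset.mem_univ, true_and] at ha ⊢
      rw [hsub]
      rw [show a - s0 + (a ^ q - s0 ^ q) = (a + a ^ q) - (s0 + s0 ^ q) by ring, ha, hs0]
      ring
    · intro a ha
      simp only [hNdef, Finset.mem_filter, Finset.mem_univ, true_and] at ha ⊢
      rw [hadd]
      rw [show a + s0 + (a ^ q + s0 ^ q) = (a + a ^ q) + (s0 + s0 ^ q) by ring, ha, hs0]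
      ring
    · intro a _; ring
    · intro a _; ring
  have hfible : ∀ c' : F, (Finset.univ.filter fun s : F => s + s ^ q = c').card ≤ N.card := by
    intro c'
    rcases Finset.eq_empty_or_nonempty (Finset.univ.filter fun s : F => s + s ^ q = c') with h | h
    · rw [h]; simp
    · obtain ⟨s0, hs0⟩ := h
      simp only [Finset.mem_filter, Finset.mem_univ, true_and] at hs0
      exact le_of_eq (hfib c' s0 hs0)
  -- bounds from the polynomial root counts
  have hNle : N.card ≤ q := by
    have hEq : N = Finset.univ.filter fun s : F => s ^ q + 1 * s = 0 := by
      ext a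
      simp only [hNdef, Finset.mem_filter, Finset.mem_univ, true_and, one_mul]
      constructor <;> intro h <;> linear_combination h
    rw [hEq]
    exact roots_card_le hq2 1
  have hKle : K.card ≤ q := by
    have hEq : K = Finset.univ.filter fun s : F => s ^ q + (-1) * s = 0 := by
      ext a
      simp only [hKdef, Finset.mem_filter, Finset.mem_univ, true_and]
      constructor <;> intro h <;> linear_combination h
    rw [hEq]
    exact roots_card_le hq2 (-1)
  -- total count
  have hsum : Fintype.card F = ∑ c' ∈ K, (Finset.univ.filter fun s : F => s + s ^ q = c').card := by
    rw [← Finset.card_univ]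
    exact Finset.card_eq_sum_card_fiberwise (fun s _ => hmemK s)
  have hle : q ^ 2 ≤ K.card * N.card := by
    calc q ^ 2 = Fintype.card F := hF.symm
      _ = ∑ c' ∈ K, (Finset.univ.filter fun s : F => s + s ^ q = c').card := hsum
      _ ≤ ∑ _c' ∈ K, N.card := Finset.sum_le_sum fun i _ => hfible i
      _ = K.card * N.card := by rw [Finset.sum_const, smul_eq_mul]
  have hKN : K.card * N.card = q ^ 2 := by
    have : K.card * N.card ≤ q ^ 2 := by
      calc K.card * N.card ≤ q * q := Nat.mul_le_mul hKle hNle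
        _ = q ^ 2 := (sq q).symm
    omega
  have hNq : N.card = q := by nlinarith [hKle, hNle, hKN]
  have hKq : K.card = q := by nlinarith [hKle, hNle, hKN]
  -- every fiber over K has card exactly N.card = q
  have hcK : c ∈ K := by
    simp only [hKdef, Finset.mem_filter, Finset.mem_univ, true_and]; exact hc
  by_contra hne
  have hlt : (Finset.univ.filter fun s : F => s + s ^ q = c).card < q :=
    lt_of_le_of_ne (hNq ▸ hfible c) hne
  have : ∑ c' ∈ K, (Finset.univ.filter fun s : F => s + s ^ q = c').card < ∑ _c' ∈ K, q :=
    Finset.sum_lt_sum (fun i _ => hNq ▸ hfible i) ⟨c, hcK, hlt⟩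
  rw [Finset.sum_const, smul_eq_mul, hKq, ← sq, ← hF, ← hsum] at this
  exact lt_irrefl _ this

end Helpers

/-- For `n ≥ 4`, the valency of the relation `R_λ`: the number of isotropic vectors `y` with
`⟨x,y⟩ = λ` equals `q^{2n−3}`. -/
theorem valency_R_large_n
    (q : ℕ) (hq : IsPrimePow q) (n : ℕ) (hn : 4 ≤ n)
    (F : Type*) [Field F] [Fintype F] (hF : Fintype.card F = q ^ 2)
    (x : Fin n → F) (hx : Isotropic q x) (lam : F) (hlam : lam ≠ 0) :
    Nat.card {y : Fin n → F // Isotropic q y ∧ herm q x y = lam} = q ^ (2 * n - 3) := by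
  classical
  have hq2le : 2 ≤ q := hq.two_le
  have hq0 : q ≠ 0 := by omega
  -- characteristic
  obtain ⟨p, k, hp, hk, hpk⟩ := hq
  have hpp : p.Prime := hp.nat_prime
  haveI : Fact p.Prime := ⟨hpp⟩
  haveI hcharp : CharP F p := by
    have hrc : CharP F (ringChar F) := ringChar.charP F
    obtain ⟨m, hrcp, hm⟩ := FiniteField.card F (ringChar F)
    have hdvd : p ∣ ringChar F ^ (m : ℕ) := by
      rw [← hm, hF, ← hpk, ← pow_mul]
      exact dvd_pow_self p (by positivity)
    have : p = ringChar F := by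
      have := hpp.dvd_of_dvd_pow hdvd
      exact ((Nat.prime_dvd_prime_iff_eq hpp hrcp).mp this)
    rwa [this]
  set σ : F →+* F := iterateFrobenius F p k with hσdef
  have hσ : ∀ a : F, σ a = a ^ q := by
    intro a
    rw [hσdef, iterateFrobenius_def, hpk]
  have h2 : ∀ a : F, a ^ (q * q) = a := by
    intro a
    rw [← pow_two, ← hF]
    exact FiniteField.pow_card a
  have hadd : ∀ a b : F, (a + b) ^ q = a ^ q + b ^ q := by
    intro a b; rw [← hσ, ← hσ, ← hσ, map_add]
  have hsub : ∀ a b : F, (a - b) ^ q = a ^ q - b ^ q := by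
    intro a b; rw [← hσ, ← hσ, ← hσ, map_sub]
  have hconj : ∀ u v : Fin n → F, herm q v u = (herm q u v) ^ q := herm_conj σ hσ h2
  -- the finsets
  set S := Finset.univ.filter (fun y : Fin n → F => herm q x y = lam ∧ herm q y y = 0) with hSdef
  set T := Finset.univ.filter (fun z : Fin n → F => herm q x z = lam) with hTdef
  -- reduce goal to S.card
  have hherm0 : herm q x (0 : Fin n → F) = 0 := by
    simp [herm, zero_pow hq0]
  have hgoal : Nat.card {y : Fin n → F // Isotropic q y ∧ herm q x y = lam} = S.card := by
    have e : {y : Fin n → F // Isotropic q y ∧ herm q x y = lam}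
        ≃ {y : Fin n → F // herm q x y = lam ∧ herm q y y = 0} :=
      Equiv.subtypeEquivRight (by
        intro y
        constructor
        · rintro ⟨⟨hy0, hyy⟩, hxy⟩; exact ⟨hxy, hyy⟩
        · rintro ⟨hxy, hyy⟩
          refine ⟨⟨?_, hyy⟩, hxy⟩
          rintro rfl
          rw [hherm0] at hxy
          exact hlam hxy.symm)
    rw [Nat.card_congr e, Nat.card_eq_fintype_card, Fintype.card_subtype]
  -- card of T
  obtain ⟨i0, hi0⟩ : ∃ i, x i ≠ 0 := Function.ne_iff.mp hx.1
  have hTcard : q ^ 2 * T.card = q ^ (2 * n) := by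
    have hsurj : ∀ c : F, ∃ z : Fin n → F, herm q x z = c := by
      intro c
      refine ⟨fun j => if j = i0 then (c / x i0) ^ q else 0, ?_⟩
      rw [herm, Finset.sum_eq_single i0]
      · rw [if_pos rfl, ← pow_mul, h2, mul_comm, div_mul_cancel₀ c hi0]
      · intro j _ hj; rw [if_neg hj, zero_pow hq0, mul_zero]
      · intro h; exact absurd (Finset.mem_univ i0) h
    have := fiber_count (fun z : Fin n → F => herm q x z)
      (fun a b => herm_add_right hadd x a b) hsurj lam
    rw [hF] at this
    rw [hTdef]
    rw [this, Fintype.card_fun, hF, Fintype.card_fin, ← pow_mul]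
  have hT2 : T.card = q ^ (2 * n - 2) := by
    have heq : q ^ 2 * T.card = q ^ 2 * q ^ (2 * n - 2) := by
      rw [hTcard, ← pow_add]
      congr 1
      omega
    exact Nat.eq_of_mul_eq_mul_left (by positivity) heq
  -- twisted trace fibers
  have hphi : ∀ c : F, c ^ q = c →
      (Finset.univ.filter fun t : F => t * lam + t ^ q * lam ^ q = c).card = q := by
    intro c hc
    refine Eq.trans ?_ (psi_count hq2le hF hadd h2 c hc)
    refine Finset.card_bij' (fun t _ => t * lam) (fun s _ => s / lam) ?_ ?_ ?_ ?_
    · intro t ht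
      simp only [Finset.mem_filter, Finset.mem_univ, true_and] at ht ⊢
      rw [mul_pow]; exact ht
    · intro s hs
      simp only [Finset.mem_filter, Finset.mem_univ, true_and] at hs ⊢
      rw [← mul_pow, div_mul_cancel₀ s hlam]
      exact hs
    · intro t _; exact mul_div_cancel_right₀ t hlam
    · intro s _; exact div_mul_cancel₀ s hlam
  -- the 2-parameter set P = S ×ˢ univ and the map β
  set P := S ×ˢ (Finset.univ : Finset F) with hPdef
  set β : (Fin n → F) × F → (Fin n → F) := fun pr => pr.1 + pr.2 • x with hβdef
  have hmem : ∀ pr ∈ P, β pr ∈ T := by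
    rintro ⟨y, t⟩ hyt
    rw [hPdef, Finset.mem_product] at hyt
    obtain ⟨hyS, -⟩ := hyt
    rw [hSdef, Finset.mem_filter] at hyS
    obtain ⟨-, hxy, hyy⟩ := hyS
    rw [hTdef, Finset.mem_filter]
    refine ⟨Finset.mem_univ _, ?_⟩
    show herm q x (y + t • x) = lam
    rw [herm_add_right hadd, herm_smul_right, hxy, hx.2, mul_zero, add_zero]
  have hPcount : P.card = ∑ z ∈ T, (P.filter fun pr => β pr = z).card :=
    Finset.card_eq_sum_card_fiberwise hmem
  have hfiber : ∀ z ∈ T, (P.filter fun pr => β pr = z).card = q := by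
    intro z hz
    rw [hTdef, Finset.mem_filter] at hz
    have hxz : herm q x z = lam := hz.2
    have hzx : herm q z x = lam ^ q := by rw [hconj x z, hxz]
    have hzz : (herm q z z) ^ q = herm q z z := (hconj z z).symm
    rw [← hphi (herm q z z) hzz]
    refine Finset.card_bij' (fun pr _ => pr.2) (fun t _ => (z - t • x, t)) ?_ ?_ ?_ ?_
    · rintro ⟨y, t⟩ hyt
      simp only [Finset.mem_filter, hPdef, Finset.mem_product, Finset.mem_univ, true_and,
        and_true, hSdef] at hyt ⊢
      obtain ⟨⟨hxy, hyy⟩, hbz⟩ := hyt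
      have hyx : herm q y x = lam ^ q := by rw [hconj x y, hxy]
      have hexp : herm q z z = t * lam + t ^ q * lam ^ q := by
        rw [← hbz]
        show herm q (y + t • x) (y + t • x) = _
        simp only [herm_add_left, herm_add_right hadd, herm_smul_left, herm_smul_right,
          hxy, hyy, hyx, hx.2]
        ring
      rw [hexp]
    · intro t ht
      simp only [Finset.mem_filter, Finset.mem_univ, true_and] at ht
      simp only [Finset.mem_filter, hPdef, Finset.mem_product, Finset.mem_univ, true_and,
        and_true, hSdef]
      refine ⟨⟨?_, ?_⟩, ?_⟩
      · show herm q x (z - t • x) = lam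
        simp only [herm_sub_right hsub, herm_smul_right, hxz, hx.2, mul_zero, sub_zero]
      · show herm q (z - t • x) (z - t • x) = 0
        simp only [herm_sub_left, herm_sub_right hsub, herm_smul_left, herm_smul_right,
          hxz, hzx, hx.2]
        linear_combination -ht
      · show z - t • x + t • x = z
        abel
    · rintro ⟨y, t⟩ hyt
      simp only [Finset.mem_filter] at hyt
      have hbz : y + t • x = z := hyt.2
      have hy : y = z - t • x := by rw [← hbz]; abel
      show (z - t • x, t) = (y, t)
      rw [← hy]
    · intro t _; rfl
  -- assemble
  have h1 : P.card = S.card * q ^ 2 := by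
    rw [hPdef, Finset.card_product, Finset.card_univ, hF]
  have h2' : P.card = T.card * q := by
    rw [hPcount, Finset.sum_congr rfl hfiber, Finset.sum_const, smul_eq_mul]
  have hScard : S.card * q ^ 2 = q ^ (2 * n - 3) * q ^ 2 := by
    rw [← h1, h2', hT2, ← pow_succ, ← pow_add]
    congr 1
    omega
  have hfin := Nat.eq_of_mul_eq_mul_right (show 0 < q ^ 2 by positivity) hScard
  rw [hgoal, hfin]
end

section
/- Let F be a field with 4 elements and n = 3. The graph on the 27 isotropic vectors Φ(3,2), in which x and y are adjacent if and only if ⟨x,y⟩ = 1, is a regular graph of valency 8 whose adjacency matrix has exactly the eigenvalues 8, −4, −1 and 2, with multiplicities 1, 6, 8 and 12 respectively. -/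
set_option maxRecDepth 100000

open Matrix Polynomial

/-- The set of isotropic vectors, as a type. -/
abbrev Phi (q n : ℕ) (F : Type*) [Field F] : Type _ := {x : Fin n → F // Isotropic q x}

noncomputable instance (q n : ℕ) (F : Type*) [Field F] [Fintype F] :
    Fintype (Phi q n F) := Fintype.ofFinite _

open Classical in
/-- Adjacency matrix of the graph on `Φ(n,2)` with `x ~ y` iff `⟨x,y⟩ = 1`. -/
noncomputable def adjR1 (n : ℕ) (F : Type*) [Field F] [Fintype F] (K : Type*) [Field K] :
    Matrix (Phi 2 n F) (Phi 2 n F) K :=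
  fun x y => if herm 2 x.1 y.1 = 1 then 1 else 0

/-! ### A concrete model of `GF(4)` on `Bool × Bool` -/

abbrev G : Type := Bool × Bool

def Gadd : G → G → G := fun x y => (xor x.1 y.1, xor x.2 y.2)

def Gmul : G → G → G := fun x y =>
  (xor (x.1 && y.1) (x.2 && y.2), xor (x.1 && y.2) (xor (x.2 && y.1) (x.2 && y.2)))

def Gconj : G → G := fun x => (xor x.1 x.2, x.2)

def Gzero : G := (false, false)

def Gone : G := (true, false)

def hermG (x y : Fin 3 → G) : G :=
  Gadd (Gmul (x 0) (Gconj (y 0))) (Gadd (Gmul (x 1) (Gconj (y 1))) (Gmul (x 2) (Gconj (y 2))))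

def vv : Fin 27 → Fin 3 → G :=
  ![![(false,false), (false,true), (false,true)],
  ![(false,false), (false,true), (true,false)],
  ![(false,false), (false,true), (true,true)],
  ![(false,false), (true,false), (false,true)],
  ![(false,false), (true,false), (true,false)],
  ![(false,false), (true,false), (true,true)],
  ![(false,false), (true,true), (false,true)],
  ![(false,false), (true,true), (true,false)],
  ![(false,false), (true,true), (true,true)],
  ![(false,true), (false,false), (false,true)],
  ![(false,true), (false,false), (true,false)],
  ![(false,true), (false,false), (true,true)],
  ![(false,true), (false,true), (false,false)],
  ![(false,true), (true,false), (false,false)],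
  ![(false,true), (true,true), (false,false)],
  ![(true,false), (false,false), (false,true)],
  ![(true,false), (false,false), (true,false)],
  ![(true,false), (false,false), (true,true)],
  ![(true,false), (false,true), (false,false)],
  ![(true,false), (true,false), (false,false)],
  ![(true,false), (true,true), (false,false)],
  ![(true,true), (false,false), (false,true)],
  ![(true,true), (false,false), (true,false)],
  ![(true,true), (false,false), (true,true)],
  ![(true,true), (false,true), (false,false)],
  ![(true,true), (true,false), (false,false)],
  ![(true,true), (true,true), (false,false)]]

def Pm : Matrix (Fin 27) (Fin 27) ℤ := Matrix.of ![
  ![1, 0, 1, 1, 0, 1, 1, 0, 1, 0, 0, 0, 0, 0, 0, 1, 0, -1, 0, 1, 0, 0, -1, -1, 1, 1, 0],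
  ![1, 0, -1, 0, -1, 0, 0, -1, -1, -1, -1, -1, -1, -1, -1, 0, 1, 0, -1, 1, 0, 0, 1, 0, 0, 0, -1],
  ![1, 0, 0, -1, -1, 0, 0, 1, 0, 0, 0, 0, 0, 0, 0, -1, -1, 1, 1, -1, -1, 0, 0, 1, 0, -1, 0],
  ![1, 0, 1, 1, 1, 0, 1, 1, 0, 0, 0, 0, 0, 0, 0, 0, 1, -1, -1, 1, 1, 0, 0, -1, 0, 1, 0],
  ![1, 0, -1, 0, 0, -1, 0, 0, 1, 0, 0, 0, 0, 0, 0, -1, -1, 1, 0, -1, 0, 0, 1, 1, -1, -1, 0],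
  ![1, 0, 0, -1, 0, -1, 0, -1, -1, -1, -1, -1, -1, -1, -1, 1, 0, 0, 1, 0, 0, -1, -1, 0, 0, 1, 0],
  ![1, 0, 1, 1, 1, 1, 0, -1, -1, -1, -1, -1, -1, -1, -1, -1, -1, 0, 0, -1, 0, 1, 0, 0, 0, -1, 1],
  ![1, 0, -1, 0, 0, 0, -1, 1, 0, 0, 0, 0, 0, 0, 0, 1, 0, 0, 0, 0, 0, 0, 0, 0, 0, 0, 0],
  ![1, 0, 0, -1, 0, 0, -1, 0, 1, 0, 0, 0, 0, 0, 0, 0, 1, 0, 0, 0, 0, 0, 0, 0, 0, 0, 0],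
  ![1, 1, -1, -1, 0, 0, -1, 0, 0, 0, 0, 1, 0, 0, 0, 0, 0, -1, 0, 0, 0, 0, 0, -1, 0, 0, 0],
  ![1, 1, 1, 0, 1, 1, 0, 0, 0, 1, 0, 0, 0, 0, 0, 0, 0, 0, -1, 0, 0, 0, 1, 1, -1, -1, -1],
  ![1, 1, 0, 1, 1, 1, 0, 0, 0, 0, 1, 0, 0, 0, 0, 0, 0, 1, 1, -1, -1, -1, -1, 0, 0, 0, 0],
  ![1, -1, 0, 0, 0, -1, 0, 0, 0, 0, 0, 0, 0, 0, 1, 0, 0, 0, 0, 0, -1, 0, 0, 0, 0, 0, -1],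
  ![1, -1, 0, 0, -1, 0, 0, 0, 0, 0, 0, 0, 1, 0, 0, 0, 0, 0, 0, 0, 0, -1, 0, 0, -1, 0, 0],
  ![1, -1, 0, 0, -1, -1, 1, 0, 0, 0, 0, 0, 0, 1, 0, 0, 0, 0, 0, -1, 0, 0, 0, 0, 0, -1, 0],
  ![1, -1, -1, -1, -1, -1, 0, 0, 0, 0, 1, 0, 0, 0, 0, 0, 0, -1, -1, 1, 1, 1, 0, 0, 0, 0, 0],
  ![1, -1, 1, 0, 0, 0, 1, 0, 0, 0, 0, 1, 0, 0, 0, 0, 0, 1, 0, 0, 0, 0, 0, 0, 0, 0, 0],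
  ![1, -1, 0, 1, 0, 0, 1, 0, 0, 1, 0, 0, 0, 0, 0, 0, 0, 0, 1, 0, 0, 0, 0, 0, 0, 0, 0],
  ![1, 1, 0, 0, 1, 0, -1, 0, 0, 0, 0, 0, 0, 1, 0, 0, 0, 0, 0, 1, 0, 0, 0, 0, 0, 0, 0],
  ![1, 1, 0, 0, 0, 1, -1, 0, 0, 0, 0, 0, 0, 0, 1, 0, 0, 0, 0, 0, 1, 0, 0, 0, 0, 0, 0],
  ![1, 1, 0, 0, 0, 0, 0, 0, 0, 0, 0, 0, 1, 0, 0, 0, 0, 0, 0, 0, 0, 1, 0, 0, 0, 0, 0],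
  ![1, 0, -1, -1, -1, -1, -1, 0, 0, 1, 0, 0, 0, 0, 0, 0, 0, 0, 0, 0, 0, 0, -1, -1, 1, 1, 1],
  ![1, 0, 1, 0, 0, 0, 0, 0, 0, 0, 1, 0, 0, 0, 0, 0, 0, 0, 0, 0, 0, 0, 1, 0, 0, 0, 0],
  ![1, 0, 0, 1, 0, 0, 0, 0, 0, 0, 0, 1, 0, 0, 0, 0, 0, 0, 0, 0, 0, 0, 0, 1, 0, 0, 0],
  ![1, 0, 0, 0, 1, 0, 0, 0, 0, 0, 0, 0, 1, 0, 0, 0, 0, 0, 0, 0, 0, 0, 0, 0, 1, 0, 0],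
  ![1, 0, 0, 0, 0, 1, 0, 0, 0, 0, 0, 0, 0, 1, 0, 0, 0, 0, 0, 0, 0, 0, 0, 0, 0, 1, 0],
  ![1, 0, 0, 0, 0, 0, 1, 0, 0, 0, 0, 0, 0, 0, 1, 0, 0, 0, 0, 0, 0, 0, 0, 0, 0, 0, 1]]

def Qm : Matrix (Fin 27) (Fin 27) ℤ := Matrix.of ![
  ![2, 2, 2, 2, 2, 2, 2, 2, 2, 2, 2, 2, 2, 2, 2, 2, 2, 2, 2, 2, 2, 2, 2, 2, 2, 2, 2],
  ![3, 3, 3, 3, 3, 3, -6, -6, -6, 3, 3, 3, -6, -6, 3, -6, -6, -6, 3, 3, 12, 3, 3, 3, -6, -6, 3],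
  ![3, -6, 3, 3, -6, 3, 3, -6, 3, -6, 3, -6, 3, 3, 3, -6, 3, -6, 3, 3, 3, 3, 12, 3, -6, -6, -6],
  ![3, 3, -6, 3, 3, -6, 3, 3, -6, -6, -6, 3, 3, 3, 3, -6, -6, 3, 3, 3, 3, 3, 3, 12, -6, -6, -6],
  ![-6, -6, -6, 3, 3, 3, 3, 3, 3, 3, 3, 3, 3, -6, -6, 3, 3, 3, 3, -6, -6, -6, -6, -6, 12, 3, 3],
  ![3, 3, 3, -6, -6, -6, 3, 3, 3, 3, 3, 3, -6, 3, -6, 3, 3, 3, -6, 3, -6, -6, -6, -6, 3, 12, 3],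
  ![3, 3, 3, 3, 3, 3, -6, -6, -6, 3, 3, 3, -6, -6, 3, 3, 3, 3, -6, -6, 3, -6, -6, -6, 3, 3, 12],
  ![-2, -2, 16, 16, -2, -2, -2, 16, -2, -2, -2, -2, -2, -2, -2, -2, -2, -2, -2, -2, -2, -2, -2, -2, -2, -2, -2],
  ![16, -2, -2, -2, 16, -2, -2, -2, 16, -2, -2, -2, -2, -2, -2, -2, -2, -2, -2, -2, -2, -2, -2, -2, -2, -2, -2],
  ![-2, -2, -2, -2, -2, -2, -2, -2, -2, -2, 16, -2, -2, -2, -2, -2, -2, 16, -2, -2, -2, 16, -2, -2, -2, -2, -2],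
  ![-2, -2, -2, -2, -2, -2, -2, -2, -2, -2, -2, 16, -2, -2, -2, 16, -2, -2, -2, -2, -2, -2, 16, -2, -2, -2, -2],
  ![-2, -2, -2, -2, -2, -2, -2, -2, -2, 16, -2, -2, -2, -2, -2, -2, 16, -2, -2, -2, -2, -2, -2, 16, -2, -2, -2],
  ![-2, -2, -2, -2, -2, -2, -2, -2, -2, -2, -2, -2, -2, 16, -2, -2, -2, -2, -2, -2, 16, -2, -2, -2, 16, -2, -2],
  ![-2, -2, -2, -2, -2, -2, -2, -2, -2, -2, -2, -2, -2, -2, 16, -2, -2, -2, 16, -2, -2, -2, -2, -2, -2, 16, -2],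
  ![-2, -2, -2, -2, -2, -2, -2, -2, -2, -2, -2, -2, 16, -2, -2, -2, -2, -2, -2, 16, -2, -2, -2, -2, -2, -2, 16],
  ![6, -3, -12, -12, -3, 6, -3, 24, -3, -3, 6, -3, -3, -3, 6, -3, 6, -3, -3, -3, 6, -3, 6, -3, -3, -3, 6],
  ![-12, 6, -3, 6, -12, -3, -3, -3, 24, -3, -3, 6, -3, -3, 6, -3, -3, 6, -3, -3, 6, -3, -3, 6, -3, -3, 6],
  ![-3, 6, -3, -3, 6, -3, -3, 6, -3, -12, -3, 6, -3, -3, -3, -3, 24, -3, 6, 6, 6, 6, -3, -12, -3, -3, -3],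
  ![-3, -3, 6, -3, -3, 6, -3, -3, 6, 6, -12, -3, -3, -3, -3, -3, -3, 24, 6, 6, 6, -12, 6, -3, -3, -3, -3],
  ![6, 6, 6, -3, -3, -3, -3, -3, -3, -3, -3, -3, -3, 6, -12, 6, 6, 6, 24, -3, -3, -3, -3, -3, -3, -12, 6],
  ![-3, -3, -3, 6, 6, 6, -3, -3, -3, -3, -3, -3, -12, -3, 6, 6, 6, 6, -3, 24, -3, -3, -3, -3, 6, -3, -12],
  ![-3, -3, -3, -3, -3, -3, 6, 6, 6, -3, -3, -3, 6, -12, -3, 6, 6, 6, -3, -3, 24, -3, -3, -3, -12, 6, -3],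
  ![-3, 6, -3, -3, 6, -3, -3, 6, -3, 6, -3, -12, -3, -3, -3, -12, -3, 6, -3, -3, -3, -3, 24, -3, 6, 6, 6],
  ![-3, -3, 6, -3, -3, 6, -3, -3, 6, -12, 6, -3, -3, -3, -3, 6, -12, -3, -3, -3, -3, -3, -3, 24, 6, 6, 6],
  ![6, 6, 6, -3, -3, -3, -3, -3, -3, -3, -3, -3, -3, -12, 6, -3, -3, -3, -3, 6, -12, 6, 6, 6, 24, -3, -3],
  ![-3, -3, -3, 6, 6, 6, -3, -3, -3, -3, -3, -3, 6, -3, -12, -3, -3, -3, -12, -3, 6, 6, 6, 6, -3, 24, -3],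
  ![-3, -3, -3, -3, -3, -3, 6, 6, 6, -3, -3, -3, -12, 6, -3, -3, -3, -3, 6, -12, -3, 6, 6, 6, -3, -3, 24]]

def Dv : Fin 27 → ℤ := ![8, -4, -4, -4, -4, -4, -4, -1, -1, -1, -1, -1, -1, -1, -1, 2, 2, 2, 2, 2, 2, 2, 2, 2, 2, 2, 2]

def MZ : Matrix (Fin 27) (Fin 27) ℤ := fun i j => if hermG (vv i) (vv j) = Gone then 1 else 0

set_option maxHeartbeats 4000000 in
lemma lemMP : MZ * Pm = Pm * Matrix.diagonal Dv := by decide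

set_option maxHeartbeats 4000000 in
lemma lemPQ : Pm * Qm = (54 : ℤ) • 1 := by decide

lemma lemIso : ∀ i : Fin 27, vv i ≠ (fun _ => Gzero) ∧ hermG (vv i) (vv i) = Gzero := by decide

lemma lemInj : ∀ i j : Fin 27, vv i = vv j → i = j := by decide

set_option maxHeartbeats 1000000 in
lemma lemSurj : ∀ x : Fin 3 → G, x ≠ (fun _ => Gzero) → hermG x x = Gzero →
    ∃ i : Fin 27, vv i = x := by decide

set_option maxHeartbeats 1000000 in
lemma lemDeg : ∀ i : Fin 27,
    (Finset.univ.filter (fun j : Fin 27 => hermG (vv i) (vv j) = Gone)).card = 8 := by decide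

/-! ### Generic charpoly lemmas -/

lemma charpoly_conj' {n : Type*} [Fintype n] [DecidableEq n] {R : Type*} [CommRing R]
    (P Q M : Matrix n n R) (h1 : P * Q = 1) (h2 : Q * P = 1) :
    (P * M * Q).charpoly = M.charpoly := by
  unfold Matrix.charpoly
  have hone : (1 : Matrix n n R).map (C : R → R[X]) = 1 :=
    Matrix.map_one _ (map_zero C) (map_one C)
  have hsc : Matrix.scalar n (X : R[X]) = (X : R[X]) • (1 : Matrix n n R[X]) := by
    ext i j
    by_cases h : i = j <;> simp [Matrix.scalar_apply, Matrix.one_apply, h,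
      Matrix.diagonal_apply]
  have hc : charmatrix (P * M * Q) =
      P.map (C : R → R[X]) * charmatrix M * Q.map (C : R → R[X]) := by
    rw [charmatrix, charmatrix, RingHom.mapMatrix_apply, RingHom.mapMatrix_apply]
    rw [hsc, mul_sub, sub_mul]
    congr 1
    · rw [mul_smul_comm, mul_one, smul_mul_assoc, ← Matrix.map_mul, h1, hone]
    · rw [← Matrix.map_mul, ← Matrix.map_mul]
  have hdet : (P.map (C : R → R[X])).det * (Q.map (C : R → R[X])).det = 1 := by
    rw [← Matrix.det_mul, ← Matrix.map_mul, h1, hone, Matrix.det_one]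
  rw [hc, Matrix.det_mul, Matrix.det_mul, mul_right_comm, hdet, one_mul]

lemma charpoly_diagonal' {n : Type*} [Fintype n] [DecidableEq n] {R : Type*} [CommRing R]
    (d : n → R) : (Matrix.diagonal d).charpoly = ∏ i, (X - C (d i)) := by
  unfold Matrix.charpoly
  have h : charmatrix (Matrix.diagonal d) = Matrix.diagonal (fun i => (X : R[X]) - C (d i)) := by
    ext i j
    by_cases h : i = j
    · subst h; simp
    · simp [h, Matrix.diagonal_apply_ne _ h]
  rw [h, Matrix.det_diagonal]

set_option maxHeartbeats 4000000 in
/-- The graph on the 27 isotropic vectors of `Φ(3,2)` with adjacency `⟨x,y⟩ = 1` is regular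
of valency 8, and its adjacency matrix has exactly the eigenvalues `8, −4, −1, 2` with
multiplicities `1, 6, 8, 12`: its characteristic polynomial is
`(X−8)(X+4)⁶(X+1)⁸(X−2)¹²`. -/
theorem gu32_R1_graph_spectrum
    (F : Type*) [Field F] [Fintype F] [DecidableEq F] (hF : Fintype.card F = 4) :
    (∀ x : Phi 2 3 F, Nat.card {y : Phi 2 3 F // herm 2 x.1 y.1 = 1} = 8) ∧
    Matrix.charpoly (adjR1 3 F ℚ) =
      (X - C 8) * (X + C 4) ^ 6 * (X + C 1) ^ 8 * (X - C 2) ^ 12 := by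
  classical
  -- characteristic 2
  have h4 : (4 : F) = 0 := by
    have h := FiniteField.cast_card_eq_zero F
    rw [hF] at h
    exact_mod_cast h
  have h2 : (2 : F) = 0 := by
    have hmul : (2 : F) * 2 = 0 := by linear_combination h4
    rcases mul_eq_zero.mp hmul with h | h <;> exact h
  -- a primitive element ω
  obtain ⟨ω, hω0, hω1⟩ : ∃ ω : F, ω ≠ 0 ∧ ω ≠ 1 := by
    by_contra hcon
    push_neg at hcon
    have hsub : (Finset.univ : Finset F) ⊆ {0, 1} := by
      intro x _
      rcases eq_or_ne x 0 with h | h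
      · simp [h]
      · simp [hcon x h]
    have := Finset.card_le_card hsub
    rw [Finset.card_univ, hF] at this
    have h01 : ({0, 1} : Finset F).card ≤ 2 :=
      (Finset.card_insert_le _ _).trans (by simp)
    omega
  have hcube : ω ^ 3 = 1 := by
    have hp : ω ^ 4 = ω := by
      have := FiniteField.pow_card ω
      rwa [hF] at this
    have hc : ω * ω ^ 3 = ω * 1 := by linear_combination hp
    exact mul_left_cancel₀ hω0 hc
  have hsq : ω ^ 2 = 1 + ω := by
    have hfac : (ω - 1) * (ω ^ 2 + ω + 1) = 0 := by linear_combination hcube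
    rcases mul_eq_zero.mp hfac with h | h
    · exact absurd (by linear_combination h) hω1
    · linear_combination h - (1 + ω) * h2
  have hb0 : (1 : F) + ω ≠ 0 := fun h => hω1 (by linear_combination h - h2)
  have hb1 : (1 : F) + ω ≠ 1 := fun h => hω0 (by linear_combination h)
  have hbω : (1 : F) + ω ≠ ω := fun h => one_ne_zero (α := F) (by linear_combination h)
  -- the embedding of the model
  set φ : G → F := fun g => (if g.1 then (1 : F) else 0) + (if g.2 then ω else 0) with hφ
  have φzero : φ Gzero = 0 := by simp [hφ, Gzero]
  have φone : φ Gone = 1 := by simp [hφ, Gone]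
  have φadd : ∀ g h : G, φ (Gadd g h) = φ g + φ h := by
    rintro ⟨a, b⟩ ⟨c, d⟩
    cases a <;> cases b <;> cases c <;> cases d <;>
      simp [hφ, Gadd] <;>
      first
        | ring1
        | linear_combination (norm := ring1) h2
        | linear_combination (norm := ring1) ω * h2
        | linear_combination (norm := ring1) (1 + ω) * h2
        | linear_combination (norm := ring1) -h2
        | linear_combination (norm := ring1) -ω * h2
        | linear_combination (norm := ring1) -(1 + ω) * h2
  have φmul : ∀ g h : G, φ (Gmul g h) = φ g * φ h := by
    rintro ⟨a, b⟩ ⟨c, d⟩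
    cases a <;> cases b <;> cases c <;> cases d <;>
      simp [hφ, Gmul] <;>
      first
        | ring1
        | linear_combination (norm := ring1) hsq
        | linear_combination (norm := ring1) -hsq
        | linear_combination (norm := ring1) hsq + h2
        | linear_combination (norm := ring1) hsq + ω * h2
        | linear_combination (norm := ring1) hsq + (1 + ω) * h2
        | linear_combination (norm := ring1) -hsq + h2
        | linear_combination (norm := ring1) -hsq + ω * h2
        | linear_combination (norm := ring1) -hsq + (1 + ω) * h2
        | linear_combination (norm := ring1) -hsq - h2
        | linear_combination (norm := ring1) -hsq - ω * h2
        | linear_combination (norm := ring1) -hsq - (1 + ω) * h2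
        | linear_combination (norm := ring1) hsq - h2
        | linear_combination (norm := ring1) hsq - ω * h2
        | linear_combination (norm := ring1) hsq - (1 + ω) * h2
        | linear_combination (norm := ring1) h2
        | linear_combination (norm := ring1) ω * h2
        | linear_combination (norm := ring1) (1 + ω) * h2
        | linear_combination (norm := ring1) -h2
        | linear_combination (norm := ring1) -ω * h2
        | linear_combination (norm := ring1) -(1 + ω) * h2
        | linear_combination (norm := ring1) hsq - 2 * h2
        | linear_combination (norm := ring1) hsq - 2 * ω * h2
        | linear_combination (norm := ring1) hsq + 2 * h2
        | linear_combination (norm := ring1) hsq + 2 * ω * h2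
        | linear_combination (norm := ring1) -hsq - 2 * h2
        | linear_combination (norm := ring1) -hsq - 2 * ω * h2
        | linear_combination (norm := ring1) -hsq + 2 * h2
        | linear_combination (norm := ring1) -hsq + 2 * ω * h2
        | linear_combination (norm := ring1) hsq - h2 - ω * h2
        | linear_combination (norm := ring1) hsq + h2 + ω * h2
        | linear_combination (norm := ring1) -hsq - h2 - ω * h2
        | linear_combination (norm := ring1) -hsq + h2 + ω * h2
        | linear_combination (norm := ring1) -hsq + h2 - ω * h2
        | linear_combination (norm := ring1) -hsq - h2 + ω * h2
        | linear_combination (norm := ring1) hsq + h2 - ω * h2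
        | linear_combination (norm := ring1) hsq - h2 + ω * h2
  have φconj : ∀ g : G, φ (Gconj g) = φ g ^ 2 := by
    rintro ⟨a, b⟩
    cases a <;> cases b <;>
      simp [hφ, Gconj] <;>
      first
        | ring1
        | linear_combination (norm := ring1) hsq
        | linear_combination (norm := ring1) -hsq
        | linear_combination (norm := ring1) -hsq + h2
        | linear_combination (norm := ring1) -hsq + ω * h2
        | linear_combination (norm := ring1) -hsq + (1 + ω) * h2
        | linear_combination (norm := ring1) -hsq - h2
        | linear_combination (norm := ring1) -hsq - ω * h2
        | linear_combination (norm := ring1) -hsq - (1 + ω) * h2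
        | linear_combination (norm := ring1) hsq + h2
        | linear_combination (norm := ring1) hsq + ω * h2
        | linear_combination (norm := ring1) hsq + (1 + ω) * h2
        | linear_combination (norm := ring1) hsq - h2
        | linear_combination (norm := ring1) hsq - ω * h2
        | linear_combination (norm := ring1) hsq - (1 + ω) * h2
        | linear_combination (norm := ring1) hsq + h2 + ω * h2
        | linear_combination (norm := ring1) hsq - h2 - ω * h2
  have φinj : Function.Injective φ := by
    rintro ⟨a, b⟩ ⟨c, d⟩ h
    cases a <;> cases b <;> cases c <;> cases d <;>
      simp [hφ] at h ⊢ <;>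
      first
        | rfl
        | exact absurd h hω0
        | exact absurd h.symm hω0
        | exact absurd h hω1
        | exact absurd h.symm hω1
        | exact absurd h hb0
        | exact absurd h.symm hb0
        | exact absurd h hb1
        | exact absurd h.symm hb1
        | exact absurd h hbω
        | exact absurd h.symm hbω
        | exact absurd h (one_ne_zero (α := F))
        | exact absurd h.symm (one_ne_zero (α := F))
        | exact absurd h (zero_ne_one (α := F))
        | exact absurd h.symm (zero_ne_one (α := F))
  have φbij : Function.Bijective φ := by
    refine (Fintype.bijective_iff_injective_and_card φ).2 ⟨φinj, ?_⟩
    simp [hF]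
  -- transport of the hermitian form
  have hermφ : ∀ x y : Fin 3 → G,
      herm 2 (fun i => φ (x i)) (fun i => φ (y i)) = φ (hermG x y) := by
    intro x y
    rw [herm, Fin.sum_univ_three]
    simp only [hermG, φadd, φmul, φconj]
    ring
  -- the equiv between the model and `Phi 2 3 F`
  set eF : (Fin 3 → G) → (Fin 3 → F) := fun x i => φ (x i) with heF
  have eFinj : Function.Injective eF := fun x y h =>
    funext fun i => φinj (congrFun h i)
  have eFsurj : Function.Surjective eF := by
    intro y
    refine ⟨fun i => (φbij.surjective (y i)).choose, funext fun i => ?_⟩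
    exact (φbij.surjective (y i)).choose_spec
  have hvv : ∀ i : Fin 27, Isotropic 2 (eF (vv i)) := by
    intro i
    obtain ⟨hne, hh⟩ := lemIso i
    constructor
    · intro hc
      apply hne
      funext k
      apply φinj
      rw [φzero]
      exact congrFun hc k
    · show herm 2 (fun k => φ (vv i k)) (fun k => φ (vv i k)) = 0
      rw [hermφ, hh, φzero]
  set f27 : Fin 27 → Phi 2 3 F := fun i => ⟨eF (vv i), hvv i⟩ with hf27
  have f27bij : Function.Bijective f27 := by
    constructor
    · intro i j h
      exact lemInj i j (eFinj (congrArg Subtype.val h))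
    · rintro ⟨y, hy0, hyh⟩
      obtain ⟨x, hx⟩ := eFsurj y
      have hx0 : x ≠ fun _ => Gzero := by
        intro hc
        apply hy0
        rw [← hx, hc]
        funext k
        exact φzero
      have hxh : hermG x x = Gzero := by
        apply φinj
        rw [φzero]
        have hxx := hermφ x x
        rw [show (fun i => φ (x i)) = eF x from rfl, hx] at hxx
        rw [← hxx, hyh]
      obtain ⟨i, hi⟩ := lemSurj x hx0 hxh
      exact ⟨i, Subtype.ext (by rw [hf27]; show eF (vv i) = y; rw [hi, hx])⟩
  set E : Fin 27 ≃ Phi 2 3 F := Equiv.ofBijective f27 f27bij with hE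
  have hEval : ∀ i : Fin 27, (E i).1 = eF (vv i) := fun i => rfl
  -- adjacency transported
  have hadj : ∀ i j : Fin 27, (herm 2 (E i).1 (E j).1 = 1 ↔ hermG (vv i) (vv j) = Gone) := by
    intro i j
    rw [hEval, hEval]
    show herm 2 (fun k => φ (vv i k)) (fun k => φ (vv j k)) = 1 ↔ _
    rw [hermφ, ← φone]
    exact ⟨fun h => φinj h, fun h => by rw [h]⟩
  constructor
  · -- valency 8
    intro x
    set i : Fin 27 := E.symm x with hi
    have hx : E i = x := E.apply_symm_apply x
    have hequiv : {j : Fin 27 // hermG (vv i) (vv j) = Gone} ≃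
        {y : Phi 2 3 F // herm 2 x.1 y.1 = 1} := by
      refine E.subtypeEquiv fun j => ?_
      rw [← hx]
      exact ((hadj i j).symm)
    rw [← Nat.card_congr hequiv, Nat.card_eq_fintype_card, Fintype.card_subtype]
    exact lemDeg i
  · -- charpoly
    set f : ℤ →+* ℚ := Int.castRingHom ℚ with hf
    set MQ : Matrix (Fin 27) (Fin 27) ℚ := MZ.map ⇑f with hMQ
    have hadjM : adjR1 3 F ℚ = Matrix.reindex E E MQ := by
      funext x y
      show _ = MQ (E.symm x) (E.symm y)
      rw [adjR1]
      rw [hMQ, Matrix.map_apply, MZ]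
      rw [show x = E (E.symm x) from (E.apply_symm_apply x).symm,
        show y = E (E.symm y) from (E.apply_symm_apply y).symm]
      rw [E.symm_apply_apply, E.symm_apply_apply]
      rcases Classical.em (hermG (vv (E.symm x)) (vv (E.symm y)) = Gone) with h | h
      · rw [if_pos ((hadj _ _).2 h), if_pos h]; simp [hf]
      · rw [if_neg (fun hc => h ((hadj _ _).1 hc)), if_neg h]; simp [hf]
    rw [hadjM, Matrix.charpoly_reindex]
    -- now pure computation over ℚ
    set Pq : Matrix (Fin 27) (Fin 27) ℚ := Pm.map ⇑f with hPq
    set Qq : Matrix (Fin 27) (Fin 27) ℚ := Qm.map ⇑f with hQq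
    set dq : Fin 27 → ℚ := fun i => (Dv i : ℚ) with hdq
    have hsmul : (((54 : ℤ) • (1 : Matrix (Fin 27) (Fin 27) ℤ)).map ⇑f) =
        (54 : ℚ) • (1 : Matrix (Fin 27) (Fin 27) ℚ) := by
      ext i j
      simp only [Matrix.map_apply, Matrix.smul_apply, Matrix.one_apply, smul_eq_mul, hf]
      by_cases h : i = j <;> simp [h]
    have hPQq : Pq * Qq = (54 : ℚ) • 1 := by
      rw [hPq, hQq, ← Matrix.map_mul, lemPQ, hsmul]
    have hMPq : MQ * Pq = Pq * Matrix.diagonal dq := by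
      rw [hMQ, hPq, ← Matrix.map_mul, lemMP, Matrix.map_mul]
      congr 1
      rw [Matrix.diagonal_map (map_zero f)]
      rfl
    set Qi : Matrix (Fin 27) (Fin 27) ℚ := (54 : ℚ)⁻¹ • Qq with hQi
    have hPQi : Pq * Qi = 1 := by
      rw [hQi, mul_smul_comm, hPQq, smul_smul]
      norm_num
    have hQiP : Qi * Pq = 1 := mul_eq_one_comm.mp hPQi
    have hMfact : MQ = Pq * Matrix.diagonal dq * Qi := by
      calc MQ = MQ * (Pq * Qi) := by rw [hPQi, mul_one]
        _ = MQ * Pq * Qi := by rw [mul_assoc]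
        _ = Pq * Matrix.diagonal dq * Qi := by rw [hMPq]
    rw [hMfact, charpoly_conj' _ _ _ hPQi hQiP, charpoly_diagonal']
    show (∏ i : Fin 27, (X - C (dq i))) = _
    rw [hdq]
    simp only [Dv, Fin.prod_univ_succ, Fin.prod_univ_zero, Matrix.cons_val_zero,
      Matrix.cons_val_succ]
    push_cast
    simp only [_root_.map_neg, _root_.map_one, map_ofNat]
    ring
end
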